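/- arXiv:2103.00404 — 3 statements merged into one kernel-verified Lean document; each statement's English description precedes it below -/
import Mathlib

section
/- (Lemma 1) For each i ∈ N, let (u_i⁺, v̂_i) be a minimizer over (u_i, v_i) ∈ C_i of the function f_i^p(u_i) + f_i^s(v_i) + ∑_{j∈N_i} ( ⟨λ_i^j + λ_j^i, v_i^j⟩ + ‖v_i^j + v_j^i(k)‖² ), where λ_i^j and v_i^j(k) are given current multipliers and shared values, and let (u*, v*, λ*) be a saddle point of the augmented Lagrangian L. Then 0 ≤ ∑_{i∈N} ( −m_i ‖u_i⁺ − u*_i‖² + ∑_{j∈N_i} ⟨λ*_i^j − λ_i^j, v̂_i^j + v̂_j^i⟩ − ∑_{j∈N_i} ‖v̂_i^j + v̂_j^i‖² − 2 ∑_{j∈N_i} ⟨v_j^i(k) − v̂_j^i, v̂_i^j − v*_i^j⟩ ). -/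
open scoped RealInnerProductSpace BigOperators

section Helpers
variable {V : Type*} [NormedAddCommGroup V] [InnerProductSpace ℝ V]

lemma adal_comb (t : ℝ) (a b : V) : (1-t)•a + t•b = a + t•(b-a) := by
  rw [sub_smul, one_smul, smul_sub]; abel

lemma adal_comb_inner (t : ℝ) (L a b : V) :
    ⟪L, (1-t)•a + t•b⟫ = ⟪L, a⟫ - t*⟪L, a-b⟫ := by
  rw [adal_comb, inner_add_right, real_inner_smul_right, ← neg_sub a b, inner_neg_right]
  ring

lemma adal_comb_norm (t : ℝ) (a b c : V) :
    ‖(1-t)•a + t•b + c‖^2 = ‖a+c‖^2 - t*(2*⟪a+c, a-b⟫) + t^2*‖a-b‖^2 := by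
  rw [adal_comb, add_right_comm, norm_add_sq_real, real_inner_smul_right, norm_smul,
    ← neg_sub a b, inner_neg_right, mul_pow, norm_neg]
  simp [Real.norm_eq_abs, sq_abs]
  ring

lemma adal_sum_swap {ι : Type*} [Fintype ι] {Nbr : ι → ι → Prop} [DecidableRel Nbr]
    (hsymm : ∀ i j, Nbr i j ↔ Nbr j i) (g : ι → ι → ℝ) :
    ∑ i, ∑ j ∈ Finset.univ.filter (fun j => Nbr i j), g i j
      = ∑ i, ∑ j ∈ Finset.univ.filter (fun j => Nbr i j), g j i := by
  simp_rw [Finset.sum_filter]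
  rw [Finset.sum_comm]
  refine Finset.sum_congr rfl fun i _ => Finset.sum_congr rfl fun j _ => ?_
  exact if_congr (hsymm j i) rfl rfl

end Helpers

/-- The augmented Lagrangian. -/
noncomputable def augLagrangian {ι : Type*} [Fintype ι] {ns : ℕ} {n : ι → ℕ}
    (Nbr : ι → ι → Prop) [DecidableRel Nbr]
    (fp : ∀ i, EuclideanSpace ℝ (Fin (n i)) → ℝ)
    (fs : ι → (ι → EuclideanSpace ℝ (Fin ns)) → ℝ)
    (u : ∀ i, EuclideanSpace ℝ (Fin (n i)))
    (v lam : ι → ι → EuclideanSpace ℝ (Fin ns)) : ℝ :=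
  ∑ i, (fp i (u i) + fs i (v i) +
    ∑ j ∈ Finset.univ.filter (fun j => Nbr i j),
      (⟪lam i j, v i j + v j i⟫ + ‖v i j + v j i‖ ^ 2))

/-- `(u*, v*, λ*)` is a saddle point of the augmented Lagrangian. -/
def IsSaddlePoint {ι : Type*} [Fintype ι] {ns : ℕ} {n : ι → ℕ}
    (Nbr : ι → ι → Prop) [DecidableRel Nbr]
    (fp : ∀ i, EuclideanSpace ℝ (Fin (n i)) → ℝ)
    (fs : ι → (ι → EuclideanSpace ℝ (Fin ns)) → ℝ)
    (C : ∀ i, Set (EuclideanSpace ℝ (Fin (n i)) × (ι → EuclideanSpace ℝ (Fin ns))))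
    (ustar : ∀ i, EuclideanSpace ℝ (Fin (n i)))
    (vstar lamstar : ι → ι → EuclideanSpace ℝ (Fin ns)) : Prop :=
  (∀ i, (ustar i, vstar i) ∈ C i) ∧
  (∀ lam : ι → ι → EuclideanSpace ℝ (Fin ns),
    augLagrangian Nbr fp fs ustar vstar lam ≤ augLagrangian Nbr fp fs ustar vstar lamstar) ∧
  (∀ (u : ∀ i, EuclideanSpace ℝ (Fin (n i))) (v : ι → ι → EuclideanSpace ℝ (Fin ns)),
    (∀ i, (u i, v i) ∈ C i) →
    augLagrangian Nbr fp fs ustar vstar lamstar ≤ augLagrangian Nbr fp fs u v lamstar)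

set_option maxHeartbeats 1000000 in
/-- Lemma 1: if `(u_i⁺, v̂_i)` minimizes the local augmented objective of agent `i` over `C_i`
and `(u*, v*, λ*)` is a saddle point of the augmented Lagrangian, then
`0 ≤ ∑ i ( −m_i ‖u_i⁺ − u*_i‖² + ∑_j ⟪λ*_i^j − λ_i^j, v̂_i^j + v̂_j^i⟫
− ∑_j ‖v̂_i^j + v̂_j^i‖² − 2 ∑_j ⟪v_j^i(k) − v̂_j^i, v̂_i^j − v*_i^j⟫ )`. -/
theorem adal_lemma_one {ι : Type*} [Fintype ι] {ns : ℕ} {n : ι → ℕ}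
    (Nbr : ι → ι → Prop) [DecidableRel Nbr]
    (hsymm : ∀ i j, Nbr i j ↔ Nbr j i) (hirr : ∀ i, ¬ Nbr i i)
    (fp : ∀ i, EuclideanSpace ℝ (Fin (n i)) → ℝ)
    (fs : ι → (ι → EuclideanSpace ℝ (Fin ns)) → ℝ)
    (C : ∀ i, Set (EuclideanSpace ℝ (Fin (n i)) × (ι → EuclideanSpace ℝ (Fin ns))))
    (m : ι → ℝ) (hm : ∀ i, 0 < m i)
    (hfp_diff : ∀ i, Differentiable ℝ (fp i))
    (hfp_sc : ∀ i, StrongConvexOn Set.univ (m i) (fp i))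
    (hfs_diff : ∀ i, Differentiable ℝ (fs i))
    (hfs_cvx : ∀ i, ConvexOn ℝ Set.univ (fs i))
    (hC_ne : ∀ i, (C i).Nonempty) (hC_cpt : ∀ i, IsCompact (C i))
    (hC_cvx : ∀ i, Convex ℝ (C i))
    -- current multipliers and shared values
    (lam vk : ι → ι → EuclideanSpace ℝ (Fin ns))
    -- minimizers of the local problems
    (uplus : ∀ i, EuclideanSpace ℝ (Fin (n i)))
    (vhat : ι → ι → EuclideanSpace ℝ (Fin ns))
    (hmin : ∀ i, (uplus i, vhat i) ∈ C i ∧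
      ∀ p ∈ C i,
        fp i (uplus i) + fs i (vhat i) +
            ∑ j ∈ Finset.univ.filter (fun j => Nbr i j),
              (⟪lam i j + lam j i, vhat i j⟫ + ‖vhat i j + vk j i‖ ^ 2)
          ≤ fp i p.1 + fs i p.2 +
            ∑ j ∈ Finset.univ.filter (fun j => Nbr i j),
              (⟪lam i j + lam j i, p.2 j⟫ + ‖p.2 j + vk j i‖ ^ 2))
    -- saddle point
    (ustar : ∀ i, EuclideanSpace ℝ (Fin (n i)))
    (vstar lamstar : ι → ι → EuclideanSpace ℝ (Fin ns))
    (hsaddle : IsSaddlePoint Nbr fp fs C ustar vstar lamstar) :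
    0 ≤ ∑ i, (- m i * ‖uplus i - ustar i‖ ^ 2 +
        ∑ j ∈ Finset.univ.filter (fun j => Nbr i j),
          ⟪lamstar i j - lam i j, vhat i j + vhat j i⟫ -
        ∑ j ∈ Finset.univ.filter (fun j => Nbr i j), ‖vhat i j + vhat j i‖ ^ 2 -
        2 * ∑ j ∈ Finset.univ.filter (fun j => Nbr i j),
          ⟪vk j i - vhat j i, vhat i j - vstar i j⟫) := by
  classical
  -- Step 1: the saddle point satisfies the coupling constraints.
  have hw : ∀ i j, Nbr i j → vstar i j + vstar j i = 0 := by
    have h := hsaddle.2.1 (fun i j => lamstar i j + (vstar i j + vstar j i))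
    unfold augLagrangian at h
    have hkey : ∑ i, ∑ j ∈ Finset.univ.filter (fun j => Nbr i j), ‖vstar i j + vstar j i‖^2 ≤ 0 := by
      have hexp : ∑ i, (fp i (ustar i) + fs i (vstar i) +
          ∑ j ∈ Finset.univ.filter (fun j => Nbr i j),
            (⟪lamstar i j + (vstar i j + vstar j i), vstar i j + vstar j i⟫
              + ‖vstar i j + vstar j i‖ ^ 2))
        = ∑ i, (fp i (ustar i) + fs i (vstar i) +
          ∑ j ∈ Finset.univ.filter (fun j => Nbr i j),
            (⟪lamstar i j, vstar i j + vstar j i⟫ + ‖vstar i j + vstar j i‖ ^ 2))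
          + ∑ i, ∑ j ∈ Finset.univ.filter (fun j => Nbr i j), ‖vstar i j + vstar j i‖^2 := by
        rw [← Finset.sum_add_distrib]
        refine Finset.sum_congr rfl fun i _ => ?_
        have hj : ∑ j ∈ Finset.univ.filter (fun j => Nbr i j),
            (⟪lamstar i j + (vstar i j + vstar j i), vstar i j + vstar j i⟫
              + ‖vstar i j + vstar j i‖ ^ 2)
          = ∑ j ∈ Finset.univ.filter (fun j => Nbr i j),
            ((⟪lamstar i j, vstar i j + vstar j i⟫ + ‖vstar i j + vstar j i‖ ^ 2)
              + ‖vstar i j + vstar j i‖^2) := by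
          refine Finset.sum_congr rfl fun j _ => ?_
          rw [inner_add_left, real_inner_self_eq_norm_sq]
        rw [hj, Finset.sum_add_distrib]
        ring
      rw [hexp] at h
      linarith
    intro i j hij
    have hnonneg : ∀ i ∈ Finset.univ, (0:ℝ) ≤ ∑ j ∈ Finset.univ.filter (fun j => Nbr i j), ‖vstar i j + vstar j i‖^2 :=
      fun i _ => Finset.sum_nonneg fun j _ => sq_nonneg _
    have hzero : ∑ i, ∑ j ∈ Finset.univ.filter (fun j => Nbr i j), ‖vstar i j + vstar j i‖^2 = 0 :=
      le_antisymm hkey (Finset.sum_nonneg hnonneg)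
    have h1 := (Finset.sum_eq_zero_iff_of_nonneg hnonneg).mp hzero i (Finset.mem_univ i)
    have h2 := (Finset.sum_eq_zero_iff_of_nonneg (fun j _ => sq_nonneg _)).mp h1 j
      (Finset.mem_filter.mpr ⟨Finset.mem_univ j, hij⟩)
    exact norm_eq_zero.mp (pow_eq_zero_iff (n := 2) (by norm_num) |>.mp h2)
  -- Step 2: the key inequality for every t ∈ (0,1)
  have hkey : ∀ t : ℝ, 0 < t → t < 1 →
      0 ≤ (∑ i, (-(m i)*‖uplus i - ustar i‖^2 + (∑ j ∈ Finset.univ.filter (fun j => Nbr i j), ⟪lamstar i j, vhat i j + vhat j i⟫) - (∑ j ∈ Finset.univ.filter (fun j => Nbr i j), ⟪lam i j + lam j i, vhat i j - vstar i j⟫) - 2*(∑ j ∈ Finset.univ.filter (fun j => Nbr i j), ⟪vhat i j + vk j i, vhat i j - vstar i j⟫))) + t * (∑ i, ((m i)*‖uplus i - ustar i‖^2 + (∑ j ∈ Finset.univ.filter (fun j => Nbr i j), ‖vhat i j - vstar i j‖^2) + (∑ j ∈ Finset.univ.filter (fun j => Nbr i j), ‖vhat i j + vhat j i‖^2))) :=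 by
    intro t ht0 ht1
    have ht0' : (0:ℝ) ≤ 1 - t := by linarith
    -- (A): per-agent inequality from the local minimization step
    have hA : ∀ i, 0 ≤ (t*(fp i (ustar i) - fp i (uplus i)) + t*(fs i (vstar i) - fs i (vhat i)) - (1-t)*t*(m i/2*‖uplus i - ustar i‖^2) - t*(∑ j ∈ Finset.univ.filter (fun j => Nbr i j), ⟪lam i j + lam j i, vhat i j - vstar i j⟫) - 2*t*(∑ j ∈ Finset.univ.filter (fun j => Nbr i j), ⟪vhat i j + vk j i, vhat i j - vstar i j⟫) + t^2*(∑ j ∈ Finset.univ.filter (fun j => Nbr i j), ‖vhat i j - vstar i j‖^2)) := by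
      intro i
      have hp : ((1-t)•uplus i + t•ustar i, (1-t)•vhat i + t•vstar i) ∈ C i :=
        hC_cvx i (hmin i).1 (hsaddle.1 i) ht0' ht0.le (by ring)
      have h : fp i (uplus i) + fs i (vhat i) +
            ∑ j ∈ Finset.univ.filter (fun j => Nbr i j),
              (⟪lam i j + lam j i, vhat i j⟫ + ‖vhat i j + vk j i‖ ^ 2)
          ≤ fp i ((1-t)•uplus i + t•ustar i) + fs i ((1-t)•vhat i + t•vstar i) +
            ∑ j ∈ Finset.univ.filter (fun j => Nbr i j),
              (⟪lam i j + lam j i, (1-t)•vhat i j + t•vstar i j⟫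
                + ‖(1-t)•vhat i j + t•vstar i j + vk j i‖ ^ 2) :=
        (hmin i).2 _ hp
      have hfp : fp i ((1-t)•uplus i + t•ustar i)
          ≤ (1-t)*fp i (uplus i) + t*fp i (ustar i) - (1-t)*t*(m i/2*‖uplus i - ustar i‖^2) := by
        have := (hfp_sc i).2 (Set.mem_univ (uplus i)) (Set.mem_univ (ustar i))
          ht0' ht0.le (show (1-t)+t = 1 by ring)
        simpa using this
      have hfs : fs i ((1-t)•vhat i + t•vstar i)
          ≤ (1-t)*fs i (vhat i) + t*fs i (vstar i) := by
        have := (hfs_cvx i).2 (Set.mem_univ (vhat i)) (Set.mem_univ (vstar i))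
          ht0' ht0.le (show (1-t)+t = 1 by ring)
        simpa using this
      have hsum : ∑ j ∈ Finset.univ.filter (fun j => Nbr i j),
            (⟪lam i j + lam j i, (1-t)•vhat i j + t•vstar i j⟫
              + ‖(1-t)•vhat i j + t•vstar i j + vk j i‖ ^ 2)
          = (∑ j ∈ Finset.univ.filter (fun j => Nbr i j),
              (⟪lam i j + lam j i, vhat i j⟫ + ‖vhat i j + vk j i‖ ^ 2))
            - t * (∑ j ∈ Finset.univ.filter (fun j => Nbr i j),
              (⟪lam i j + lam j i, vhat i j - vstar i j⟫
                + 2*⟪vhat i j + vk j i, vhat i j - vstar i j⟫))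
            + t^2 * (∑ j ∈ Finset.univ.filter (fun j => Nbr i j), ‖vhat i j - vstar i j‖^2) := by
        rw [Finset.mul_sum, Finset.mul_sum, ← Finset.sum_sub_distrib, ← Finset.sum_add_distrib]
        refine Finset.sum_congr rfl fun j _ => ?_
        rw [adal_comb_inner, adal_comb_norm]
        ring
      have hMK : ∑ j ∈ Finset.univ.filter (fun j => Nbr i j),
            (⟪lam i j + lam j i, vhat i j - vstar i j⟫
              + 2*⟪vhat i j + vk j i, vhat i j - vstar i j⟫)
          = (∑ j ∈ Finset.univ.filter (fun j => Nbr i j), ⟪lam i j + lam j i, vhat i j - vstar i j⟫) + 2*(∑ j ∈ Finset.univ.filter (fun j => Nbr i j), ⟪vhat i j + vk j i, vhat i j - vstar i j⟫) := by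
        rw [Finset.mul_sum, ← Finset.sum_add_distrib]
      rw [hsum, hMK] at h
      linarith [h, hfp, hfs]
    -- (B): summed inequality from the saddle-point minimization property
    have hB : 0 ≤ ∑ i, (t*(fp i (uplus i) - fp i (ustar i)) + t*(fs i (vhat i) - fs i (vstar i)) - (1-t)*t*(m i/2*‖uplus i - ustar i‖^2) + t*(∑ j ∈ Finset.univ.filter (fun j => Nbr i j), ⟪lamstar i j, vhat i j + vhat j i⟫) + t^2*(∑ j ∈ Finset.univ.filter (fun j => Nbr i j), ‖vhat i j + vhat j i‖^2)) := by
      have hmem : ∀ i, (((1-t)•ustar i + t•uplus i : EuclideanSpace ℝ (Fin (n i))),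
          ((1-t)•vstar i + t•vhat i : ι → EuclideanSpace ℝ (Fin ns))) ∈ C i := fun i =>
        hC_cvx i (hsaddle.1 i) (hmin i).1 ht0' ht0.le (by ring)
      have h : ∑ i, (fp i (ustar i) + fs i (vstar i) +
            ∑ j ∈ Finset.univ.filter (fun j => Nbr i j),
              (⟪lamstar i j, vstar i j + vstar j i⟫ + ‖vstar i j + vstar j i‖ ^ 2))
          ≤ ∑ i, (fp i ((1-t)•ustar i + t•uplus i) + fs i ((1-t)•vstar i + t•vhat i) +
            ∑ j ∈ Finset.univ.filter (fun j => Nbr i j),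
              (⟪lamstar i j, ((1-t)•vstar i j + t•vhat i j) + ((1-t)•vstar j i + t•vhat j i)⟫
                + ‖((1-t)•vstar i j + t•vhat i j) + ((1-t)•vstar j i + t•vhat j i)‖ ^ 2)) :=
        hsaddle.2.2 _ _ hmem
      have hLHS : ∑ i, (fp i (ustar i) + fs i (vstar i) +
            ∑ j ∈ Finset.univ.filter (fun j => Nbr i j),
              (⟪lamstar i j, vstar i j + vstar j i⟫ + ‖vstar i j + vstar j i‖ ^ 2))
          = ∑ i, (fp i (ustar i) + fs i (vstar i)) := by
        refine Finset.sum_congr rfl fun i _ => ?_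
        rw [Finset.sum_eq_zero, add_zero]
        intro j hj
        rw [hw i j (Finset.mem_filter.mp hj).2, inner_zero_right, norm_zero]
        norm_num
      have hq : ∀ i, ∑ j ∈ Finset.univ.filter (fun j => Nbr i j),
            (⟪lamstar i j, ((1-t)•vstar i j + t•vhat i j) + ((1-t)•vstar j i + t•vhat j i)⟫
              + ‖((1-t)•vstar i j + t•vhat i j) + ((1-t)•vstar j i + t•vhat j i)‖ ^ 2)
          = t*(∑ j ∈ Finset.univ.filter (fun j => Nbr i j), ⟪lamstar i j, vhat i j + vhat j i⟫) + t^2*(∑ j ∈ Finset.univ.filter (fun j => Nbr i j), ‖vhat i j + vhat j i‖^2) := by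
        intro i
        rw [Finset.mul_sum, Finset.mul_sum, ← Finset.sum_add_distrib]
        refine Finset.sum_congr rfl fun j hj => ?_
        have harg : ((1-t)•vstar i j + t•vhat i j) + ((1-t)•vstar j i + t•vhat j i)
            = t•(vhat i j + vhat j i) := by
          have h0 := hw i j (Finset.mem_filter.mp hj).2
          calc ((1-t)•vstar i j + t•vhat i j) + ((1-t)•vstar j i + t•vhat j i)
              = (1-t)•(vstar i j + vstar j i) + t•(vhat i j + vhat j i) := by
                rw [smul_add, smul_add]; abel
            _ = t•(vhat i j + vhat j i) := by rw [h0, smul_zero, zero_add]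
        rw [harg, real_inner_smul_right, norm_smul, mul_pow]
        simp only [Real.norm_eq_abs, sq_abs]
      have hfpB : ∀ i, fp i ((1-t)•ustar i + t•uplus i)
          ≤ (1-t)*fp i (ustar i) + t*fp i (uplus i) - (1-t)*t*(m i/2*‖uplus i - ustar i‖^2) := by
        intro i
        have := (hfp_sc i).2 (Set.mem_univ (ustar i)) (Set.mem_univ (uplus i))
          ht0' ht0.le (show (1-t)+t = 1 by ring)
        rw [norm_sub_rev] at this
        simpa using this
      have hfsB : ∀ i, fs i ((1-t)•vstar i + t•vhat i)
          ≤ (1-t)*fs i (vstar i) + t*fs i (vhat i) := by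
        intro i
        have := (hfs_cvx i).2 (Set.mem_univ (vstar i)) (Set.mem_univ (vhat i))
          ht0' ht0.le (show (1-t)+t = 1 by ring)
        simpa using this
      have h2 : ∑ i, (fp i (ustar i) + fs i (vstar i))
          ≤ ∑ i, ((1-t)*fp i (ustar i) + t*fp i (uplus i) - (1-t)*t*(m i/2*‖uplus i - ustar i‖^2)
              + ((1-t)*fs i (vstar i) + t*fs i (vhat i)) + (t*(∑ j ∈ Finset.univ.filter (fun j => Nbr i j), ⟪lamstar i j, vhat i j + vhat j i⟫) + t^2*(∑ j ∈ Finset.univ.filter (fun j => Nbr i j), ‖vhat i j + vhat j i‖^2))) := by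
        rw [← hLHS]
        refine h.trans (Finset.sum_le_sum fun i _ => ?_)
        rw [hq i]
        linarith [hfpB i, hfsB i]
      have h3 : ∑ i, ((1-t)*fp i (ustar i) + t*fp i (uplus i) - (1-t)*t*(m i/2*‖uplus i - ustar i‖^2)
              + ((1-t)*fs i (vstar i) + t*fs i (vhat i)) + (t*(∑ j ∈ Finset.univ.filter (fun j => Nbr i j), ⟪lamstar i j, vhat i j + vhat j i⟫) + t^2*(∑ j ∈ Finset.univ.filter (fun j => Nbr i j), ‖vhat i j + vhat j i‖^2)))
            - ∑ i, (fp i (ustar i) + fs i (vstar i))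
          = ∑ i, (t*(fp i (uplus i) - fp i (ustar i)) + t*(fs i (vhat i) - fs i (vstar i)) - (1-t)*t*(m i/2*‖uplus i - ustar i‖^2) + t*(∑ j ∈ Finset.univ.filter (fun j => Nbr i j), ⟪lamstar i j, vhat i j + vhat j i⟫) + t^2*(∑ j ∈ Finset.univ.filter (fun j => Nbr i j), ‖vhat i j + vhat j i‖^2)) := by
        rw [← Finset.sum_sub_distrib]
        exact Finset.sum_congr rfl fun i _ => by ring
      linarith [h2, h3.le, h3.symm.le]
    -- combine (A) and (B)
    have hAB : 0 ≤ ∑ i, ((t*(fp i (ustar i) - fp i (uplus i)) + t*(fs i (vstar i) - fs i (vhat i)) - (1-t)*t*(m i/2*‖uplus i - ustar i‖^2) - t*(∑ j ∈ Finset.univ.filter (fun j => Nbr i j), ⟪lam i j + lam j i, vhat i j - vstar i j⟫) - 2*t*(∑ j ∈ Finset.univ.filter (fun j => Nbr i j), ⟪vhat i j + vk j i, vhat i j - vstar i j⟫) + t^2*(∑ j ∈ Finset.univ.filter (fun j => Nbr i j), ‖vhat i j - vstar i j‖^2)) + (t*(fp i (uplus i) - fp i (ustar i)) + t*(fs i (vhat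 i) - fs i (vstar i)) - (1-t)*t*(m i/2*‖uplus i - ustar i‖^2) + t*(∑ j ∈ Finset.univ.filter (fun j => Nbr i j), ⟪lamstar i j, vhat i j + vhat j i⟫) + t^2*(∑ j ∈ Finset.univ.filter (fun j => Nbr i j), ‖vhat i j + vhat j i‖^2))) := by
      rw [Finset.sum_add_distrib]
      have := Finset.sum_nonneg (fun i (_ : i ∈ Finset.univ) => hA i)
      linarith
    have hcomb : ∑ i, ((t*(fp i (ustar i) - fp i (uplus i)) + t*(fs i (vstar i) - fs i (vhat i)) - (1-t)*t*(m i/2*‖uplus i - ustar i‖^2) - t*(∑ j ∈ Finset.univ.filter (fun j => Nbr i j), ⟪lam i j + lam j i, vhat i j - vstar i j⟫) - 2*t*(∑ j ∈ Finset.univ.filter (fun j => Nbr i j), ⟪vhat i j + vk j i, vhat i j - vstar i j⟫) + t^2*(∑ j ∈ Finset.univ.filter (fun j => Nbr i j), ‖vhat i j - vstar i j‖^2)) + (t*(fp i (uplus i) - fp i (ustar i)) + t*(fs i (vhat i) - fs i (vstar i)) - (1-t)*t*(m i/2*‖uplus i - ustar i‖^2) + t*(∑ j ∈ Finset.univ.filter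 (fun j => Nbr i j), ⟪lamstar i j, vhat i j + vhat j i⟫) + t^2*(∑ j ∈ Finset.univ.filter (fun j => Nbr i j), ‖vhat i j + vhat j i‖^2)))
        = t * ((∑ i, (-(m i)*‖uplus i - ustar i‖^2 + (∑ j ∈ Finset.univ.filter (fun j => Nbr i j), ⟪lamstar i j, vhat i j + vhat j i⟫) - (∑ j ∈ Finset.univ.filter (fun j => Nbr i j), ⟪lam i j + lam j i, vhat i j - vstar i j⟫) - 2*(∑ j ∈ Finset.univ.filter (fun j => Nbr i j), ⟪vhat i j + vk j i, vhat i j - vstar i j⟫))) + t * (∑ i, ((m i)*‖uplus i - ustar i‖^2 + (∑ j ∈ Finset.univ.filter (fun j => Nbr i j), ‖vhat i j - vstar i j‖^2) + (∑ j ∈ Finset.univ.filter (fun j => Nbr i j), ‖vhat i j + vhat j i‖^2)))) := by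
      rw [mul_add, ← mul_assoc, Finset.mul_sum, Finset.mul_sum, ← Finset.sum_add_distrib]
      exact Finset.sum_congr rfl fun i _ => by ring
    rw [hcomb] at hAB
    have h0 : t * 0 ≤ t * ((∑ i, (-(m i)*‖uplus i - ustar i‖^2 + (∑ j ∈ Finset.univ.filter (fun j => Nbr i j), ⟪lamstar i j, vhat i j + vhat j i⟫) - (∑ j ∈ Finset.univ.filter (fun j => Nbr i j), ⟪lam i j + lam j i, vhat i j - vstar i j⟫) - 2*(∑ j ∈ Finset.univ.filter (fun j => Nbr i j), ⟪vhat i j + vk j i, vhat i j - vstar i j⟫))) + t * (∑ i, ((m i)*‖uplus i - ustar i‖^2 + (∑ j ∈ Finset.univ.filter (fun j => Nbr i j), ‖vhat i j - vstar i j‖^2) + (∑ j ∈ Finset.univ.filter (fun j => Nbr i j), ‖vhat i j + vhat j i‖^2)))) := by rwa [mul_zero]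
    exact le_of_mul_le_mul_left h0 ht0
  -- Step 3: take t → 0⁺
  have hS : 0 ≤ ∑ i, (-(m i)*‖uplus i - ustar i‖^2 + (∑ j ∈ Finset.univ.filter (fun j => Nbr i j), ⟪lamstar i j, vhat i j + vhat j i⟫) - (∑ j ∈ Finset.univ.filter (fun j => Nbr i j), ⟪lam i j + lam j i, vhat i j - vstar i j⟫) - 2*(∑ j ∈ Finset.univ.filter (fun j => Nbr i j), ⟪vhat i j + vk j i, vhat i j - vstar i j⟫)) := by
    have hKnn : (0:ℝ) ≤ ∑ i, ((m i)*‖uplus i - ustar i‖^2 + (∑ j ∈ Finset.univ.filter (fun j => Nbr i j), ‖vhat i j - vstar i j‖^2) + (∑ j ∈ Finset.univ.filter (fun j => Nbr i j), ‖vhat i j + vhat j i‖^2)) := by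
      refine Finset.sum_nonneg fun i _ => ?_
      have h1 : (0:ℝ) ≤ ‖uplus i - ustar i‖^2 := sq_nonneg _
      have h2 : (0:ℝ) ≤ (∑ j ∈ Finset.univ.filter (fun j => Nbr i j), ‖vhat i j - vstar i j‖^2) := Finset.sum_nonneg fun j _ => sq_nonneg _
      have h3 : (0:ℝ) ≤ (∑ j ∈ Finset.univ.filter (fun j => Nbr i j), ‖vhat i j + vhat j i‖^2) := Finset.sum_nonneg fun j _ => sq_nonneg _
      linarith [mul_nonneg (hm i).le h1, h2, h3]
    by_contra hneg
    push_neg at hneg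
    rcases hKnn.lt_or_eq with hKpos | hK0
    · set S := ∑ i, (-(m i)*‖uplus i - ustar i‖^2 + (∑ j ∈ Finset.univ.filter (fun j => Nbr i j), ⟪lamstar i j, vhat i j + vhat j i⟫) - (∑ j ∈ Finset.univ.filter (fun j => Nbr i j), ⟪lam i j + lam j i, vhat i j - vstar i j⟫) - 2*(∑ j ∈ Finset.univ.filter (fun j => Nbr i j), ⟪vhat i j + vk j i, vhat i j - vstar i j⟫)) with hSdef
      set Kc := ∑ i, ((m i)*‖uplus i - ustar i‖^2 + (∑ j ∈ Finset.univ.filter (fun j => Nbr i j), ‖vhat i j - vstar i j‖^2) + (∑ j ∈ Finset.univ.filter (fun j => Nbr i j), ‖vhat i j + vhat j i‖^2)) with hKdef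
      have hSneg : S < 0 := hneg
      have ht0 : (0:ℝ) < min (1/2) (-S/(2*Kc)) :=
        lt_min (by norm_num) (div_pos (by linarith) (by linarith))
      have ht1 : min (1/2) (-S/(2*Kc)) < 1 :=
        lt_of_le_of_lt (min_le_left _ _) (by norm_num)
      have hk := hkey _ ht0 ht1
      have hmul : min (1/2) (-S/(2*Kc)) * Kc ≤ (-S/(2*Kc)) * Kc :=
        mul_le_mul_of_nonneg_right (min_le_right _ _) (le_of_lt hKpos)
      have heq : (-S/(2*Kc)) * Kc = -S/2 := by
        field_simp
      nlinarith [hk, hmul, heq]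
    · have hk := hkey (1/2) (by norm_num) (by norm_num)
      rw [← hK0] at hk
      linarith
  -- Step 4: identify the sum with the goal, using symmetry of the neighbor relation
  have hMid : ∑ i, (∑ j ∈ Finset.univ.filter (fun j => Nbr i j), ⟪lam i j + lam j i, vhat i j - vstar i j⟫) = ∑ i, (∑ j ∈ Finset.univ.filter (fun j => Nbr i j), ⟪lam i j, vhat i j + vhat j i⟫) := by
    have e1 : ∑ i, (∑ j ∈ Finset.univ.filter (fun j => Nbr i j), ⟪lam i j + lam j i, vhat i j - vstar i j⟫)
        = ∑ i, (∑ j ∈ Finset.univ.filter (fun j => Nbr i j), ⟪lam i j, vhat i j - vstar i j⟫)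
          + ∑ i, (∑ j ∈ Finset.univ.filter (fun j => Nbr i j), ⟪lam j i, vhat i j - vstar i j⟫) := by
      rw [← Finset.sum_add_distrib]
      refine Finset.sum_congr rfl fun i _ => ?_
      rw [← Finset.sum_add_distrib]
      exact Finset.sum_congr rfl fun j _ => inner_add_left _ _ _
    have e2 : ∑ i, (∑ j ∈ Finset.univ.filter (fun j => Nbr i j), ⟪lam j i, vhat i j - vstar i j⟫)
        = ∑ i, (∑ j ∈ Finset.univ.filter (fun j => Nbr i j), ⟪lam i j, vhat j i - vstar j i⟫) :=
      adal_sum_swap hsymm (fun i j => ⟪lam j i, vhat i j - vstar i j⟫)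
    rw [e1, e2, ← Finset.sum_add_distrib]
    refine Finset.sum_congr rfl fun i _ => ?_
    rw [← Finset.sum_add_distrib]
    refine Finset.sum_congr rfl fun j hj => ?_
    rw [← inner_add_right, sub_add_sub_comm, hw i j (Finset.mem_filter.mp hj).2, sub_zero]
  have hWid : ∑ i, (2*(∑ j ∈ Finset.univ.filter (fun j => Nbr i j), ⟪vhat i j + vhat j i, vhat i j - vstar i j⟫)) = ∑ i, (∑ j ∈ Finset.univ.filter (fun j => Nbr i j), ‖vhat i j + vhat j i‖^2) := by
    have e1 : ∑ i, (∑ j ∈ Finset.univ.filter (fun j => Nbr i j), ⟪vhat i j + vhat j i, vhat i j - vstar i j⟫)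
        = ∑ i, (∑ j ∈ Finset.univ.filter (fun j => Nbr i j), ⟪vhat i j + vhat j i, vhat j i - vstar j i⟫) := by
      have := adal_sum_swap hsymm
        (fun i j => ⟪vhat j i + vhat i j, vhat i j - vstar i j⟫)
      calc ∑ i, (∑ j ∈ Finset.univ.filter (fun j => Nbr i j), ⟪vhat i j + vhat j i, vhat i j - vstar i j⟫)
          = ∑ i, (∑ j ∈ Finset.univ.filter (fun j => Nbr i j), ⟪vhat j i + vhat i j, vhat i j - vstar i j⟫) := by
            refine Finset.sum_congr rfl fun i _ => Finset.sum_congr rfl fun j _ => ?_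
            rw [add_comm (vhat i j)]
        _ = ∑ i, (∑ j ∈ Finset.univ.filter (fun j => Nbr i j), ⟪vhat i j + vhat j i, vhat j i - vstar j i⟫) := this
    calc ∑ i, (2*(∑ j ∈ Finset.univ.filter (fun j => Nbr i j), ⟪vhat i j + vhat j i, vhat i j - vstar i j⟫))
        = ∑ i, (∑ j ∈ Finset.univ.filter (fun j => Nbr i j), ⟪vhat i j + vhat j i, vhat i j - vstar i j⟫) + ∑ i, (∑ j ∈ Finset.univ.filter (fun j => Nbr i j), ⟪vhat i j + vhat j i, vhat i j - vstar i j⟫) := by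
          rw [← Finset.sum_add_distrib]
          exact Finset.sum_congr rfl fun i _ => two_mul _
      _ = ∑ i, (∑ j ∈ Finset.univ.filter (fun j => Nbr i j), ⟪vhat i j + vhat j i, vhat i j - vstar i j⟫) + ∑ i, (∑ j ∈ Finset.univ.filter (fun j => Nbr i j), ⟪vhat i j + vhat j i, vhat j i - vstar j i⟫) := by
          rw [e1]
      _ = ∑ i, ((∑ j ∈ Finset.univ.filter (fun j => Nbr i j), ⟪vhat i j + vhat j i, vhat i j - vstar i j⟫) + ∑ j ∈ Finset.univ.filter (fun j => Nbr i j), ⟪vhat i j + vhat j i, vhat j i - vstar j i⟫) :=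
          Finset.sum_add_distrib.symm
      _ = ∑ i, (∑ j ∈ Finset.univ.filter (fun j => Nbr i j), ‖vhat i j + vhat j i‖^2) := by
          refine Finset.sum_congr rfl fun i _ => ?_
          rw [← Finset.sum_add_distrib]
          refine Finset.sum_congr rfl fun j hj => ?_
          rw [← inner_add_right, sub_add_sub_comm, hw i j (Finset.mem_filter.mp hj).2,
            sub_zero, real_inner_self_eq_norm_sq]
  have hKid : ∑ i, (2*(∑ j ∈ Finset.univ.filter (fun j => Nbr i j), ⟪vhat i j + vk j i, vhat i j - vstar i j⟫)) = ∑ i, (∑ j ∈ Finset.univ.filter (fun j => Nbr i j), ‖vhat i j + vhat j i‖^2) + ∑ i, (2*(∑ j ∈ Finset.univ.filter (fun j => Nbr i j), ⟪vk j i - vhat j i, vhat i j - vstar i j⟫)) := by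
    have e1 : ∀ i, (∑ j ∈ Finset.univ.filter (fun j => Nbr i j), ⟪vhat i j + vk j i, vhat i j - vstar i j⟫) = (∑ j ∈ Finset.univ.filter (fun j => Nbr i j), ⟪vk j i - vhat j i, vhat i j - vstar i j⟫) + (∑ j ∈ Finset.univ.filter (fun j => Nbr i j), ⟪vhat i j + vhat j i, vhat i j - vstar i j⟫) := by
      intro i
      rw [← Finset.sum_add_distrib]
      refine Finset.sum_congr rfl fun j _ => ?_
      rw [← inner_add_left]
      congr 1
      abel
    calc ∑ i, (2*(∑ j ∈ Finset.univ.filter (fun j => Nbr i j), ⟪vhat i j + vk j i, vhat i j - vstar i j⟫)) = ∑ i, (2*(∑ j ∈ Finset.univ.filter (fun j => Nbr i j), ⟪vk j i - vhat j i, vhat i j - vstar i j⟫) + 2*(∑ j ∈ Finset.univ.filter (fun j => Nbr i j), ⟪vhat i j + vhat j i, vhat i j - vstar i j⟫)) := by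
          refine Finset.sum_congr rfl fun i _ => ?_
          rw [e1 i]; ring
      _ = ∑ i, (2*(∑ j ∈ Finset.univ.filter (fun j => Nbr i j), ⟪vk j i - vhat j i, vhat i j - vstar i j⟫)) + ∑ i, (2*(∑ j ∈ Finset.univ.filter (fun j => Nbr i j), ⟪vhat i j + vhat j i, vhat i j - vstar i j⟫)) := Finset.sum_add_distrib
      _ = ∑ i, (∑ j ∈ Finset.univ.filter (fun j => Nbr i j), ‖vhat i j + vhat j i‖^2) + ∑ i, (2*(∑ j ∈ Finset.univ.filter (fun j => Nbr i j), ⟪vk j i - vhat j i, vhat i j - vstar i j⟫)) := by rw [hWid]; ring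
  have hT : ∑ i, (- m i * ‖uplus i - ustar i‖ ^ 2 + ∑ j ∈ Finset.univ.filter (fun j => Nbr i j), ⟪lamstar i j - lam i j, vhat i j + vhat j i⟫ - ∑ j ∈ Finset.univ.filter (fun j => Nbr i j), ‖vhat i j + vhat j i‖ ^ 2 - 2 * ∑ j ∈ Finset.univ.filter (fun j => Nbr i j), ⟪vk j i - vhat j i, vhat i j - vstar i j⟫)
      = ∑ i, (-(m i)*‖uplus i - ustar i‖^2 + (∑ j ∈ Finset.univ.filter (fun j => Nbr i j), ⟪lamstar i j, vhat i j + vhat j i⟫)) - ∑ i, (∑ j ∈ Finset.univ.filter (fun j => Nbr i j), ⟪lam i j, vhat i j + vhat j i⟫) - ∑ i, (∑ j ∈ Finset.univ.filter (fun j => Nbr i j), ‖vhat i j + vhat j i‖^2) - ∑ i, (2*(∑ j ∈ Finset.univ.filter (fun j => Nbr i j), ⟪vk j i - vhat j i, vhat i j - vstar i j⟫)) := by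
    rw [← Finset.sum_sub_distrib, ← Finset.sum_sub_distrib, ← Finset.sum_sub_distrib]
    refine Finset.sum_congr rfl fun i _ => ?_
    have hsplit : ∑ j ∈ Finset.univ.filter (fun j => Nbr i j), ⟪lamstar i j - lam i j, vhat i j + vhat j i⟫
        = (∑ j ∈ Finset.univ.filter (fun j => Nbr i j), ⟪lamstar i j, vhat i j + vhat j i⟫) - (∑ j ∈ Finset.univ.filter (fun j => Nbr i j), ⟪lam i j, vhat i j + vhat j i⟫) := by
      rw [← Finset.sum_sub_distrib]
      exact Finset.sum_congr rfl fun j _ => inner_sub_left _ _ _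
    rw [hsplit]
    ring
  have hSsplit : ∑ i, (-(m i)*‖uplus i - ustar i‖^2 + (∑ j ∈ Finset.univ.filter (fun j => Nbr i j), ⟪lamstar i j, vhat i j + vhat j i⟫) - (∑ j ∈ Finset.univ.filter (fun j => Nbr i j), ⟪lam i j + lam j i, vhat i j - vstar i j⟫) - 2*(∑ j ∈ Finset.univ.filter (fun j => Nbr i j), ⟪vhat i j + vk j i, vhat i j - vstar i j⟫))
      = ∑ i, (-(m i)*‖uplus i - ustar i‖^2 + (∑ j ∈ Finset.univ.filter (fun j => Nbr i j), ⟪lamstar i j, vhat i j + vhat j i⟫)) - ∑ i, (∑ j ∈ Finset.univ.filter (fun j => Nbr i j), ⟪lam i j + lam j i, vhat i j - vstar i j⟫) - ∑ i, (2*(∑ j ∈ Finset.univ.filter (fun j => Nbr i j), ⟪vhat i j + vk j i, vhat i j - vstar i j⟫)) := by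
    rw [← Finset.sum_sub_distrib, ← Finset.sum_sub_distrib]
  rw [hT, ← hMid]
  rw [hSsplit] at hS
  linarith [hS, hKid]
end

section
/- (Lemma 2) For each i ∈ N, let (u_i⁺, v̂_i) be a minimizer over (u_i, v_i) ∈ C_i of the function f_i^p(u_i) + f_i^s(v_i) + ∑_{j∈N_i} ( ⟨λ_i^j + λ_j^i, v_i^j⟩ + ‖v_i^j + v_j^i(k)‖² ), let (u*, v*, λ*) be a saddle point of the augmented Lagrangian L, let η_i^j ∈ (0,1) be step sizes, and define λ̃_i^j = λ_i^j + (1 − η_i^j)(v_i^j(k) + v_j^i(k)). Then ∑_{i∈N} ∑_{j∈N_i} ⟨λ̃_i^j − λ*_i^j, v̂_i^j + v̂_j^i⟩ + 2 ∑_{i∈N} ∑_{j∈N_i} ⟨v̂_i^j − v_i^j(k), v_i^j(k) − v*_i^j⟩ ≤ ∑_{i∈N} ( −m_i ‖u_i⁺ − u*_i‖² − ∑_{j∈N_i} (3/2) ‖v̂_i^j − v_i^j(k)‖² − ∑_{j∈N_i} ((η_i^j + η_j^i − (η_i^j + η_j^i)²)/2) ‖v̂_i^j + v̂_j^i‖²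 ). -/
set_option maxHeartbeats 2000000

open scoped RealInnerProductSpace BigOperators

private lemma adal_key_aux (Δ Q : ℝ) (hΔ : 0 ≤ Δ)
    (h : ∀ t : ℝ, 0 < t → t < 1 → (1 - t) * Q ≤ Δ) : Q ≤ Δ := by
  rcases le_or_gt Q 0 with hQ | hQ
  · linarith
  · by_contra hlt
    push_neg at hlt
    have hnum : 0 < Q - Δ := by linarith
    have ht := h ((Q - Δ) / (2 * Q)) (by positivity) (by rw [div_lt_one (by positivity)]; linarith)
    have heQ : (Q - Δ) / (2 * Q) * Q = (Q - Δ) / 2 := by field_simp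
    nlinarith [ht, heQ]

private lemma adal_comb_norm_sq {E : Type*} [NormedAddCommGroup E] [InnerProductSpace ℝ E]
    (a b : ℝ) (hab : a + b = 1) (x y c : E) :
    ‖a • x + b • y + c‖ ^ 2 = a * ‖x + c‖ ^ 2 + b * ‖y + c‖ ^ 2 - a * b * ‖x - y‖ ^ 2 := by
  have hb : b = 1 - a := by linarith
  subst hb
  simp only [← real_inner_self_eq_norm_sq, inner_add_left, inner_add_right, inner_sub_left,
    inner_sub_right, real_inner_smul_left, real_inner_smul_right, real_inner_comm y x,
    real_inner_comm c x, real_inner_comm c y]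
  ring

private lemma adal_pair_ineq {E : Type*} [NormedAddCommGroup E] [InnerProductSpace ℝ E]
    (a a' b b' p c c' l l' : E) (η η' : ℝ) :
    (⟪c + (1 - η) • (b + b') - l, a + a'⟫ + 2 * ⟪a - b, b - p⟫
      + (3 / 2 : ℝ) * ‖a - b‖ ^ 2 + ((η + η' - (η + η') ^ 2) / 2) * ‖a + a'‖ ^ 2
      + (⟪l, a + a'⟫ + ⟪c + c', p - a⟫ + ‖p + b'‖ ^ 2 - ‖a + b'‖ ^ 2 - ‖a - p‖ ^ 2))
    + (⟪c' + (1 - η') • (b' + b) - l', a' + a⟫ + 2 * ⟪a' - b', b' - -p⟫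
      + (3 / 2 : ℝ) * ‖a' - b'‖ ^ 2 + ((η' + η - (η' + η) ^ 2) / 2) * ‖a' + a‖ ^ 2
      + (⟪l', a' + a⟫ + ⟪c' + c, -p - a'⟫ + ‖-p + b‖ ^ 2 - ‖a' + b‖ ^ 2 - ‖a' - -p‖ ^ 2))
    ≤ 0 := by
  have h1 : (0:ℝ) ≤ ‖(a - b) - (a' - b')‖ ^ 2 := by positivity
  have h2 : (0:ℝ) ≤ ‖(1 - 2 * (η + η')) • (a + a') - (b + b')‖ ^ 2 := by positivity
  have hid : (⟪c + (1 - η) • (b + b') - l, a + a'⟫ + 2 * ⟪a - b, b - p⟫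
      + (3 / 2 : ℝ) * ‖a - b‖ ^ 2 + ((η + η' - (η + η') ^ 2) / 2) * ‖a + a'‖ ^ 2
      + (⟪l, a + a'⟫ + ⟪c + c', p - a⟫ + ‖p + b'‖ ^ 2 - ‖a + b'‖ ^ 2 - ‖a - p‖ ^ 2))
    + (⟪c' + (1 - η') • (b' + b) - l', a' + a⟫ + 2 * ⟪a' - b', b' - -p⟫
      + (3 / 2 : ℝ) * ‖a' - b'‖ ^ 2 + ((η' + η - (η' + η) ^ 2) / 2) * ‖a' + a‖ ^ 2
      + (⟪l', a' + a⟫ + ⟪c' + c, -p - a'⟫ + ‖-p + b‖ ^ 2 - ‖a' + b‖ ^ 2 - ‖a' - -p‖ ^ 2))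
    = -(1/4) * ‖(a - b) - (a' - b')‖ ^ 2
      - (1/4) * ‖(1 - 2 * (η + η')) • (a + a') - (b + b')‖ ^ 2 := by
    simp only [← real_inner_self_eq_norm_sq, inner_add_left, inner_add_right, inner_sub_left,
      inner_sub_right, inner_neg_left, inner_neg_right, real_inner_smul_left,
      real_inner_smul_right, real_inner_comm a' a, real_inner_comm b a, real_inner_comm b a',
      real_inner_comm b' a, real_inner_comm b' a', real_inner_comm b' b, real_inner_comm p a,
      real_inner_comm p a', real_inner_comm p b, real_inner_comm p b']
    ring
  linarith

/-- Lemma 2: under the hypotheses of Lemma 1, with step sizes `η_i^j ∈ (0,1)` and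
`λ̃_i^j = λ_i^j + (1 − η_i^j)(v_i^j(k) + v_j^i(k))`, one has
`∑∑ ⟪λ̃_i^j − λ*_i^j, v̂_i^j + v̂_j^i⟫ + 2 ∑∑ ⟪v̂_i^j − v_i^j(k), v_i^j(k) − v*_i^j⟫
≤ ∑ i ( −m_i ‖u_i⁺ − u*_i‖² − ∑_j (3/2) ‖v̂_i^j − v_i^j(k)‖²
− ∑_j ((η_i^j + η_j^i − (η_i^j + η_j^i)²)/2) ‖v̂_i^j + v̂_j^i‖² )`. -/
theorem adal_lemma_two {ι : Type*} [Fintype ι] {ns : ℕ} {n : ι → ℕ}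
    (Nbr : ι → ι → Prop) [DecidableRel Nbr]
    (hsymm : ∀ i j, Nbr i j ↔ Nbr j i) (hirr : ∀ i, ¬ Nbr i i)
    (fp : ∀ i, EuclideanSpace ℝ (Fin (n i)) → ℝ)
    (fs : ι → (ι → EuclideanSpace ℝ (Fin ns)) → ℝ)
    (C : ∀ i, Set (EuclideanSpace ℝ (Fin (n i)) × (ι → EuclideanSpace ℝ (Fin ns))))
    (m : ι → ℝ) (hm : ∀ i, 0 < m i)
    (hfp_diff : ∀ i, Differentiable ℝ (fp i))
    (hfp_sc : ∀ i, StrongConvexOn Set.univ (m i) (fp i))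
    (hfs_diff : ∀ i, Differentiable ℝ (fs i))
    (hfs_cvx : ∀ i, ConvexOn ℝ Set.univ (fs i))
    (hC_ne : ∀ i, (C i).Nonempty) (hC_cpt : ∀ i, IsCompact (C i))
    (hC_cvx : ∀ i, Convex ℝ (C i))
    -- current multipliers and shared values
    (lam vk : ι → ι → EuclideanSpace ℝ (Fin ns))
    -- minimizers of the local problems
    (uplus : ∀ i, EuclideanSpace ℝ (Fin (n i)))
    (vhat : ι → ι → EuclideanSpace ℝ (Fin ns))
    (hmin : ∀ i, (uplus i, vhat i) ∈ C i ∧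
      ∀ p ∈ C i,
        fp i (uplus i) + fs i (vhat i) +
            ∑ j ∈ Finset.univ.filter (fun j => Nbr i j),
              (⟪lam i j + lam j i, vhat i j⟫ + ‖vhat i j + vk j i‖ ^ 2)
          ≤ fp i p.1 + fs i p.2 +
            ∑ j ∈ Finset.univ.filter (fun j => Nbr i j),
              (⟪lam i j + lam j i, p.2 j⟫ + ‖p.2 j + vk j i‖ ^ 2))
    -- saddle point
    (ustar : ∀ i, EuclideanSpace ℝ (Fin (n i)))
    (vstar lamstar : ι → ι → EuclideanSpace ℝ (Fin ns))
    (hsaddle : IsSaddlePoint Nbr fp fs C ustar vstar lamstar)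
    -- step sizes and auxiliary multipliers
    (η : ι → ι → ℝ) (hη : ∀ i j, Nbr i j → η i j ∈ Set.Ioo (0 : ℝ) 1)
    (lamTilde : ι → ι → EuclideanSpace ℝ (Fin ns))
    (hlamTilde : ∀ i j, Nbr i j →
      lamTilde i j = lam i j + (1 - η i j) • (vk i j + vk j i)) :
    (∑ i, ∑ j ∈ Finset.univ.filter (fun j => Nbr i j),
        ⟪lamTilde i j - lamstar i j, vhat i j + vhat j i⟫) +
      2 * ∑ i, ∑ j ∈ Finset.univ.filter (fun j => Nbr i j),
        ⟪vhat i j - vk i j, vk i j - vstar i j⟫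
    ≤ ∑ i, (- m i * ‖uplus i - ustar i‖ ^ 2 -
        ∑ j ∈ Finset.univ.filter (fun j => Nbr i j), (3 / 2 : ℝ) * ‖vhat i j - vk i j‖ ^ 2 -
        ∑ j ∈ Finset.univ.filter (fun j => Nbr i j),
          ((η i j + η j i - (η i j + η j i) ^ 2) / 2) * ‖vhat i j + vhat j i‖ ^ 2) := by
  classical
  obtain ⟨hstar_mem, hsad1, hsad2⟩ := hsaddle
  -- Step C: shared consensus at the saddle point
  have hC : ∀ i j, Nbr i j → vstar i j + vstar j i = 0 := by
    intro i j hij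
    have hkey : ∀ w : EuclideanSpace ℝ (Fin ns), ⟪w, vstar i j + vstar j i⟫ ≤ 0 := by
      intro w
      have hle := hsad1 (fun i' j' => if i' = i ∧ j' = j then lamstar i j + w else lamstar i' j')
      simp only [augLagrangian] at hle
      have hsplit : ∀ i' : ι,
          (∑ j' ∈ Finset.univ.filter (fun j' => Nbr i' j'),
            (⟪if i' = i ∧ j' = j then lamstar i j + w else lamstar i' j',
              vstar i' j' + vstar j' i'⟫ + ‖vstar i' j' + vstar j' i'‖ ^ 2))
          = (∑ j' ∈ Finset.univ.filter (fun j' => Nbr i' j'),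
              (⟪lamstar i' j', vstar i' j' + vstar j' i'⟫ + ‖vstar i' j' + vstar j' i'‖ ^ 2))
            + (if i' = i then ⟪w, vstar i j + vstar j i⟫ else 0) := by
        intro i'
        by_cases hii : i' = i
        · subst hii
          rw [if_pos rfl]
          have hjF : j ∈ Finset.univ.filter (fun j' => Nbr i' j') :=
            Finset.mem_filter.mpr ⟨Finset.mem_univ j, hij⟩
          rw [← Finset.add_sum_erase _ _ hjF, ← Finset.add_sum_erase _ _ hjF]
          have e2 : (∑ j' ∈ (Finset.univ.filter (fun j' => Nbr i' j')).erase j,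
              (⟪if i' = i' ∧ j' = j then lamstar i' j + w else lamstar i' j',
                vstar i' j' + vstar j' i'⟫ + ‖vstar i' j' + vstar j' i'‖ ^ 2))
              = ∑ j' ∈ (Finset.univ.filter (fun j' => Nbr i' j')).erase j,
                (⟪lamstar i' j', vstar i' j' + vstar j' i'⟫ + ‖vstar i' j' + vstar j' i'‖ ^ 2) :=
            Finset.sum_congr rfl fun j' hj' => by
              rw [if_neg (fun h => (Finset.mem_erase.mp hj').1 h.2)]
          rw [e2, if_pos (⟨rfl, rfl⟩ : i' = i' ∧ j = j), inner_add_left]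
          ring
        · rw [if_neg hii, add_zero]
          exact Finset.sum_congr rfl fun j' _ => by rw [if_neg (fun h => hii h.1)]
      simp only [hsplit] at hle
      simp only [← add_assoc, Finset.sum_add_distrib, Finset.sum_ite_eq', Finset.mem_univ,
        if_true] at hle
      linarith
    have h2 := hkey (vstar i j + vstar j i)
    exact real_inner_self_nonpos.mp h2
  -- the stationary value of L at the saddle point
  have hLstar : (∑ i, (fp i (ustar i) + fs i (vstar i) +
      ∑ j ∈ Finset.univ.filter (fun j => Nbr i j),
        (⟪lamstar i j, vstar i j + vstar j i⟫ + ‖vstar i j + vstar j i‖ ^ 2)))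
      = ∑ i, (fp i (ustar i) + fs i (vstar i)) := by
    refine Finset.sum_congr rfl fun i _ => ?_
    have h0 : (∑ j ∈ Finset.univ.filter (fun j => Nbr i j),
        (⟪lamstar i j, vstar i j + vstar j i⟫ + ‖vstar i j + vstar j i‖ ^ 2)) = 0 :=
      Finset.sum_eq_zero fun j hj => by rw [hC i j (Finset.mem_filter.mp hj).2]; simp
    rw [h0, add_zero]
  -- Step A: per-agent strong-convexity improvement at the local minimizer
  have hA : ∀ i, m i / 2 * ‖uplus i - ustar i‖ ^ 2 +
      ∑ j ∈ Finset.univ.filter (fun j => Nbr i j), ‖vhat i j - vstar i j‖ ^ 2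
      ≤ (fp i (ustar i) + fs i (vstar i) + ∑ j ∈ Finset.univ.filter (fun j => Nbr i j),
          (⟪lam i j + lam j i, vstar i j⟫ + ‖vstar i j + vk j i‖ ^ 2))
        - (fp i (uplus i) + fs i (vhat i) + ∑ j ∈ Finset.univ.filter (fun j => Nbr i j),
          (⟪lam i j + lam j i, vhat i j⟫ + ‖vhat i j + vk j i‖ ^ 2)) := by
    intro i
    refine adal_key_aux _ _ ?_ ?_
    · have h0 := (hmin i).2 (ustar i, vstar i) (hstar_mem i)
      dsimp only at h0
      linarith
    · intro t ht0 ht1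
      have hab : (1 - t) + t = 1 := by ring
      have hmem : ((1 - t) • uplus i + t • ustar i, (1 - t) • vhat i + t • vstar i) ∈ C i :=
        hC_cvx i (hmin i).1 (hstar_mem i) (by linarith) ht0.le hab
      have hle := (hmin i).2 ((1 - t) • uplus i + t • ustar i, (1 - t) • vhat i + t • vstar i) hmem
      dsimp only at hle
      have hfp := (hfp_sc i).2 (Set.mem_univ (uplus i)) (Set.mem_univ (ustar i))
        (by linarith : (0:ℝ) ≤ 1 - t) ht0.le hab
      simp only [smul_eq_mul] at hfp
      have hfs := (hfs_cvx i).2 (Set.mem_univ (vhat i)) (Set.mem_univ (vstar i))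
        (by linarith : (0:ℝ) ≤ 1 - t) ht0.le hab
      simp only [smul_eq_mul] at hfs
      have hsum : (∑ j ∈ Finset.univ.filter (fun j => Nbr i j),
          (⟪lam i j + lam j i, ((1 - t) • vhat i + t • vstar i) j⟫
            + ‖((1 - t) • vhat i + t • vstar i) j + vk j i‖ ^ 2))
          = (1 - t) * ∑ j ∈ Finset.univ.filter (fun j => Nbr i j),
              (⟪lam i j + lam j i, vhat i j⟫ + ‖vhat i j + vk j i‖ ^ 2)
            + t * ∑ j ∈ Finset.univ.filter (fun j => Nbr i j),
              (⟪lam i j + lam j i, vstar i j⟫ + ‖vstar i j + vk j i‖ ^ 2)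
            - (1 - t) * t * ∑ j ∈ Finset.univ.filter (fun j => Nbr i j),
              ‖vhat i j - vstar i j‖ ^ 2 := by
        rw [Finset.mul_sum, Finset.mul_sum, Finset.mul_sum, ← Finset.sum_add_distrib,
          ← Finset.sum_sub_distrib]
        refine Finset.sum_congr rfl fun j hj => ?_
        have happ : ((1 - t) • vhat i + t • vstar i) j = (1 - t) • vhat i j + t • vstar i j := rfl
        rw [happ, adal_comb_norm_sq (1 - t) t hab (vhat i j) (vstar i j) (vk j i),
          inner_add_right, real_inner_smul_right, real_inner_smul_right]
        ring
      rw [hsum] at hle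
      nlinarith [hle, hfp, hfs, ht0, ht1]
  -- Step B: improvement at the saddle-point minimizer of L
  have hB : (∑ i, (m i / 2 * ‖uplus i - ustar i‖ ^ 2 +
        ∑ j ∈ Finset.univ.filter (fun j => Nbr i j), ‖vhat i j + vhat j i‖ ^ 2))
      ≤ (∑ i, (fp i (uplus i) + fs i (vhat i) + ∑ j ∈ Finset.univ.filter (fun j => Nbr i j),
          (⟪lamstar i j, vhat i j + vhat j i⟫ + ‖vhat i j + vhat j i‖ ^ 2)))
        - ∑ i, (fp i (ustar i) + fs i (vstar i)) := by
    refine adal_key_aux _ _ ?_ ?_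
    · have h0 := hsad2 uplus vhat (fun i => (hmin i).1)
      simp only [augLagrangian] at h0
      rw [hLstar] at h0
      linarith
    · intro t ht0 ht1
      have hab : (1 - t) + t = 1 := by ring
      have hmem : ∀ i', (((1 - t) • ustar + t • uplus) i', ((1 - t) • vstar + t • vhat) i') ∈ C i' :=
        fun i' => hC_cvx i' (hstar_mem i') ((hmin i').1) (by linarith) ht0.le hab
      have h1 := hsad2 ((1 - t) • ustar + t • uplus) ((1 - t) • vstar + t • vhat) hmem
      simp only [augLagrangian, Pi.add_apply, Pi.smul_apply] at h1
      rw [hLstar] at h1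
      have hmid : (∑ i, (fp i ((1 - t) • ustar i + t • uplus i)
            + fs i ((1 - t) • vstar i + t • vhat i)
            + ∑ j ∈ Finset.univ.filter (fun j => Nbr i j),
              (⟪lamstar i j, (1 - t) • vstar i j + t • vhat i j
                  + ((1 - t) • vstar j i + t • vhat j i)⟫
                + ‖(1 - t) • vstar i j + t • vhat i j
                  + ((1 - t) • vstar j i + t • vhat j i)‖ ^ 2)))
          ≤ ∑ i, ((1 - t) * (fp i (ustar i) + fs i (vstar i))
            + t * (fp i (uplus i) + fs i (vhat i) + ∑ j ∈ Finset.univ.filter (fun j => Nbr i j),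
                (⟪lamstar i j, vhat i j + vhat j i⟫ + ‖vhat i j + vhat j i‖ ^ 2))
            - (1 - t) * t * (m i / 2 * ‖uplus i - ustar i‖ ^ 2
              + ∑ j ∈ Finset.univ.filter (fun j => Nbr i j), ‖vhat i j + vhat j i‖ ^ 2)) := by
        refine Finset.sum_le_sum fun i _ => ?_
        have hfp := (hfp_sc i).2 (Set.mem_univ (ustar i)) (Set.mem_univ (uplus i))
          (by linarith : (0:ℝ) ≤ 1 - t) ht0.le hab
        simp only [smul_eq_mul] at hfp
        rw [norm_sub_rev (ustar i) (uplus i)] at hfp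
        have hfs := (hfs_cvx i).2 (Set.mem_univ (vstar i)) (Set.mem_univ (vhat i))
          (by linarith : (0:ℝ) ≤ 1 - t) ht0.le hab
        simp only [smul_eq_mul] at hfs
        have hq : (∑ j ∈ Finset.univ.filter (fun j => Nbr i j),
            (⟪lamstar i j, (1 - t) • vstar i j + t • vhat i j
                + ((1 - t) • vstar j i + t • vhat j i)⟫
              + ‖(1 - t) • vstar i j + t • vhat i j
                + ((1 - t) • vstar j i + t • vhat j i)‖ ^ 2))
            = t * ∑ j ∈ Finset.univ.filter (fun j => Nbr i j),
                (⟪lamstar i j, vhat i j + vhat j i⟫ + ‖vhat i j + vhat j i‖ ^ 2)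
              - (1 - t) * t * ∑ j ∈ Finset.univ.filter (fun j => Nbr i j),
                ‖vhat i j + vhat j i‖ ^ 2 := by
          rw [Finset.mul_sum, Finset.mul_sum, ← Finset.sum_sub_distrib]
          refine Finset.sum_congr rfl fun j hj => ?_
          have hij : Nbr i j := (Finset.mem_filter.mp hj).2
          have hz : (1 - t) • vstar i j + t • vhat i j
              + ((1 - t) • vstar j i + t • vhat j i) = t • (vhat i j + vhat j i) := by
            have hmod : (1 - t) • vstar i j + t • vhat i j
                + ((1 - t) • vstar j i + t • vhat j i)
                = (1 - t) • (vstar i j + vstar j i) + t • (vhat i j + vhat j i) := by module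
            rw [hmod, hC i j hij, smul_zero, zero_add]
          rw [hz, real_inner_smul_right, norm_smul, Real.norm_eq_abs, mul_pow, sq_abs]
          ring
        rw [hq]
        linarith [hfp, hfs]
      have hEq : (∑ i, ((1 - t) * (fp i (ustar i) + fs i (vstar i))
            + t * (fp i (uplus i) + fs i (vhat i) + ∑ j ∈ Finset.univ.filter (fun j => Nbr i j),
                (⟪lamstar i j, vhat i j + vhat j i⟫ + ‖vhat i j + vhat j i‖ ^ 2))
            - (1 - t) * t * (m i / 2 * ‖uplus i - ustar i‖ ^ 2
              + ∑ j ∈ Finset.univ.filter (fun j => Nbr i j), ‖vhat i j + vhat j i‖ ^ 2)))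
          = (1 - t) * ∑ i, (fp i (ustar i) + fs i (vstar i))
            + t * ∑ i, (fp i (uplus i) + fs i (vhat i)
              + ∑ j ∈ Finset.univ.filter (fun j => Nbr i j),
                (⟪lamstar i j, vhat i j + vhat j i⟫ + ‖vhat i j + vhat j i‖ ^ 2))
            - (1 - t) * t * ∑ i, (m i / 2 * ‖uplus i - ustar i‖ ^ 2
              + ∑ j ∈ Finset.univ.filter (fun j => Nbr i j), ‖vhat i j + vhat j i‖ ^ 2) := by
        rw [Finset.mul_sum, Finset.mul_sum, Finset.mul_sum, ← Finset.sum_add_distrib,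
          ← Finset.sum_sub_distrib]
      rw [hEq] at hmid
      nlinarith [h1, hmid, ht0, ht1]
  -- Step D: combining A and B
  have hD : (∑ i, m i * ‖uplus i - ustar i‖ ^ 2)
      ≤ ∑ i, ∑ j ∈ Finset.univ.filter (fun j => Nbr i j),
        (⟪lamstar i j, vhat i j + vhat j i⟫ + ⟪lam i j + lam j i, vstar i j - vhat i j⟫
          + ‖vstar i j + vk j i‖ ^ 2 - ‖vhat i j + vk j i‖ ^ 2
          - ‖vhat i j - vstar i j‖ ^ 2) := by
    have hAsum := Finset.sum_le_sum (fun i (_ : i ∈ (Finset.univ : Finset ι)) => hA i)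
    have hbridge : (∑ i, m i * ‖uplus i - ustar i‖ ^ 2)
        = 2 * ∑ i, m i / 2 * ‖uplus i - ustar i‖ ^ 2 := by
      rw [Finset.mul_sum]; exact Finset.sum_congr rfl fun i _ => by ring
    simp only [Finset.sum_add_distrib, Finset.sum_sub_distrib, inner_add_left,
      inner_sub_right] at hAsum hB ⊢
    linarith [hbridge, hAsum, hB]
  -- symmetrized swap of double sums over the neighbour relation
  have hswap : ∀ g : ι → ι → ℝ,
      (∑ i, ∑ j ∈ Finset.univ.filter (fun j => Nbr i j), g i j)
      = ∑ i, ∑ j ∈ Finset.univ.filter (fun j => Nbr i j), g j i := by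
    intro g
    simp only [Finset.sum_filter]
    rw [Finset.sum_comm]
    exact Finset.sum_congr rfl fun i _ => Finset.sum_congr rfl fun j _ =>
      if_congr (hsymm j i) rfl rfl
  -- the key combined inequality
  have hKsum : (∑ i, ∑ j ∈ Finset.univ.filter (fun j => Nbr i j),
      (⟪lamTilde i j - lamstar i j, vhat i j + vhat j i⟫
        + 2 * ⟪vhat i j - vk i j, vk i j - vstar i j⟫
        + (3 / 2 : ℝ) * ‖vhat i j - vk i j‖ ^ 2
        + ((η i j + η j i - (η i j + η j i) ^ 2) / 2) * ‖vhat i j + vhat j i‖ ^ 2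
        + (⟪lamstar i j, vhat i j + vhat j i⟫ + ⟪lam i j + lam j i, vstar i j - vhat i j⟫
          + ‖vstar i j + vk j i‖ ^ 2 - ‖vhat i j + vk j i‖ ^ 2
          - ‖vhat i j - vstar i j‖ ^ 2))) ≤ 0 := by
    have hpair : ∀ i : ι, ∀ j ∈ Finset.univ.filter (fun j => Nbr i j),
        ((⟪lamTilde i j - lamstar i j, vhat i j + vhat j i⟫
          + 2 * ⟪vhat i j - vk i j, vk i j - vstar i j⟫
          + (3 / 2 : ℝ) * ‖vhat i j - vk i j‖ ^ 2
          + ((η i j + η j i - (η i j + η j i) ^ 2) / 2) * ‖vhat i j + vhat j i‖ ^ 2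
          + (⟪lamstar i j, vhat i j + vhat j i⟫ + ⟪lam i j + lam j i, vstar i j - vhat i j⟫
            + ‖vstar i j + vk j i‖ ^ 2 - ‖vhat i j + vk j i‖ ^ 2
            - ‖vhat i j - vstar i j‖ ^ 2))
        + (⟪lamTilde j i - lamstar j i, vhat j i + vhat i j⟫
          + 2 * ⟪vhat j i - vk j i, vk j i - vstar j i⟫
          + (3 / 2 : ℝ) * ‖vhat j i - vk j i‖ ^ 2
          + ((η j i + η i j - (η j i + η i j) ^ 2) / 2) * ‖vhat j i + vhat i j‖ ^ 2
          + (⟪lamstar j i, vhat j i + vhat i j⟫ + ⟪lam j i + lam i j, vstar j i - vhat j i⟫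
            + ‖vstar j i + vk i j‖ ^ 2 - ‖vhat j i + vk i j‖ ^ 2
            - ‖vhat j i - vstar j i‖ ^ 2))) ≤ 0 := by
      intro i j hj
      have hij : Nbr i j := (Finset.mem_filter.mp hj).2
      have hji : Nbr j i := (hsymm i j).mp hij
      have hp : vstar j i = -vstar i j := by
        have h0 := hC i j hij; rw [add_comm] at h0; exact eq_neg_of_add_eq_zero_left h0
      rw [hlamTilde i j hij, hlamTilde j i hji, hp]
      linarith [adal_pair_ineq (vhat i j) (vhat j i) (vk i j) (vk j i) (vstar i j)
        (lam i j) (lam j i) (lamstar i j) (lamstar j i) (η i j) (η j i)]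
    have h2 : (∑ i, ∑ j ∈ Finset.univ.filter (fun j => Nbr i j),
        ((⟪lamTilde i j - lamstar i j, vhat i j + vhat j i⟫
          + 2 * ⟪vhat i j - vk i j, vk i j - vstar i j⟫
          + (3 / 2 : ℝ) * ‖vhat i j - vk i j‖ ^ 2
          + ((η i j + η j i - (η i j + η j i) ^ 2) / 2) * ‖vhat i j + vhat j i‖ ^ 2
          + (⟪lamstar i j, vhat i j + vhat j i⟫ + ⟪lam i j + lam j i, vstar i j - vhat i j⟫
            + ‖vstar i j + vk j i‖ ^ 2 - ‖vhat i j + vk j i‖ ^ 2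
            - ‖vhat i j - vstar i j‖ ^ 2))
        + (⟪lamTilde j i - lamstar j i, vhat j i + vhat i j⟫
          + 2 * ⟪vhat j i - vk j i, vk j i - vstar j i⟫
          + (3 / 2 : ℝ) * ‖vhat j i - vk j i‖ ^ 2
          + ((η j i + η i j - (η j i + η i j) ^ 2) / 2) * ‖vhat j i + vhat i j‖ ^ 2
          + (⟪lamstar j i, vhat j i + vhat i j⟫ + ⟪lam j i + lam i j, vstar j i - vhat j i⟫
            + ‖vstar j i + vk i j‖ ^ 2 - ‖vhat j i + vk i j‖ ^ 2
            - ‖vhat j i - vstar j i‖ ^ 2)))) ≤ 0 :=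
      Finset.sum_nonpos fun i _ => Finset.sum_nonpos fun j hj => hpair i j hj
    have h4 : (∑ i, ∑ j ∈ Finset.univ.filter (fun j => Nbr i j),
        (⟪lamTilde i j - lamstar i j, vhat i j + vhat j i⟫
          + 2 * ⟪vhat i j - vk i j, vk i j - vstar i j⟫
          + (3 / 2 : ℝ) * ‖vhat i j - vk i j‖ ^ 2
          + ((η i j + η j i - (η i j + η j i) ^ 2) / 2) * ‖vhat i j + vhat j i‖ ^ 2
          + (⟪lamstar i j, vhat i j + vhat j i⟫ + ⟪lam i j + lam j i, vstar i j - vhat i j⟫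
            + ‖vstar i j + vk j i‖ ^ 2 - ‖vhat i j + vk j i‖ ^ 2
            - ‖vhat i j - vstar i j‖ ^ 2)))
        = ∑ i, ∑ j ∈ Finset.univ.filter (fun j => Nbr i j),
        (⟪lamTilde j i - lamstar j i, vhat j i + vhat i j⟫
          + 2 * ⟪vhat j i - vk j i, vk j i - vstar j i⟫
          + (3 / 2 : ℝ) * ‖vhat j i - vk j i‖ ^ 2
          + ((η j i + η i j - (η j i + η i j) ^ 2) / 2) * ‖vhat j i + vhat i j‖ ^ 2
          + (⟪lamstar j i, vhat j i + vhat i j⟫ + ⟪lam j i + lam i j, vstar j i - vhat j i⟫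
            + ‖vstar j i + vk i j‖ ^ 2 - ‖vhat j i + vk i j‖ ^ 2
            - ‖vhat j i - vstar j i‖ ^ 2)) :=
      hswap fun i j =>
        ⟪lamTilde i j - lamstar i j, vhat i j + vhat j i⟫
          + 2 * ⟪vhat i j - vk i j, vk i j - vstar i j⟫
          + (3 / 2 : ℝ) * ‖vhat i j - vk i j‖ ^ 2
          + ((η i j + η j i - (η i j + η j i) ^ 2) / 2) * ‖vhat i j + vhat j i‖ ^ 2
          + (⟪lamstar i j, vhat i j + vhat j i⟫ + ⟪lam i j + lam j i, vstar i j - vhat i j⟫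
            + ‖vstar i j + vk j i‖ ^ 2 - ‖vhat i j + vk j i‖ ^ 2
            - ‖vhat i j - vstar i j‖ ^ 2)
    simp only [Finset.sum_add_distrib, Finset.sum_sub_distrib] at h2 h4 ⊢
    linarith [h2, h4]
  -- final assembly
  simp only [Finset.sum_add_distrib, Finset.sum_sub_distrib, Finset.mul_sum, neg_mul,
    Finset.sum_neg_distrib] at hKsum hD ⊢
  linarith [hKsum, hD]
end

section
/- (Lemma 3) Let the sequences (u(k), v(k), v̂(k), λ(k)) be generated by Algorithm 1 with symmetric step sizes η_i^j = η_j^i = η_ij ∈ (0, 1/4), and let (u*, v*, λ*) be a saddle point of the augmented Lagrangian L. Define λ̃_i^j(k) = λ_i^j(k) + (1 − η_ij)( v_i^j(k) + v_j^i(k) ) and V(k) = ∑_{i∈N} ∑_{j∈N_i} η_ij^{−1} ( ‖v_i^j(k) − v*_i^j‖² + (1/2) ‖λ̃_i^j(k) − λ*_i^j‖² ). Then the sequence {V(k)} is monotonically non-increasing and, for every k, V(k+1) − V(k) ≤ − ∑_{i∈N} m_i ‖u_i(k+1) − u*_i‖² − ∑_{i∈N} ∑_{j∈N_i} (3/2 −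 η_ij) ‖v̂_i^j(k) − v_i^j(k)‖² − ∑_{i∈N} ∑_{j∈N_i} ((η_ij − (2η_ij)²)/2) ‖v̂_i^j(k) + v̂_j^i(k)‖². -/
open scoped RealInnerProductSpace BigOperators

/-!
Each agent's step minimizes, over a convex set, a function that is `m_i`-strongly convex in the
private variable and `2`-strongly convex in the shared one; moving from the minimizer towards the
saddle point along a segment shows that the minimizer undercuts the value at the saddle point by a
quadratic margin. Symmetrically, the saddle point minimizes the Lagrangian with multipliers `λ*`,
which undercuts the new iterate by `∑ m_i/2 ‖u_i − u*_i‖²`. Adding the two margins and exchanging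
`i` and `j` in the multiplier terms bounds the dual pairing `∑ ⟨λ − λ*, v̂_i^j + v̂_j^i⟩`. The
updates give `V(k+1) − V(k)` exactly, and after the bound what is left over an edge, taken in both
directions, is
`−½ ‖(v̂_i^j − v_i^j) − 2η (v̂_i^j + v̂_j^i)‖² − ½ ‖(v̂_j^i − v_j^i) − 2η (v̂_i^j + v̂_j^i)‖²`.
Monotonicity follows since `η < 1/4` makes all the subtracted terms nonnegative.
-/

open Finset Filter Topology

theorem IsMinOn.add_le_of_segment_le {E : Type*} [AddCommGroup E] [Module ℝ E]
    {g : E → ℝ} {s : Set E} {x y : E} {Q : ℝ}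
    (hx : IsMinOn g s x) (hs : Convex ℝ s) (hxs : x ∈ s) (hys : y ∈ s)
    (hg : ∀ t ∈ Set.Ioo (0 : ℝ) 1,
      g (t • y + (1 - t) • x) ≤ t * g y + (1 - t) * g x - t * (1 - t) * Q) :
    g x + Q ≤ g y := by
  have hlim : Tendsto (fun t : ℝ => g x + (1 - t) * Q) (𝓝[>] 0) (𝓝 (g x + Q)) := by
    have h : Continuous fun t : ℝ => g x + (1 - t) * Q := by fun_prop
    simpa using (h.tendsto 0).mono_left nhdsWithin_le_nhds
  refine le_of_tendsto hlim ?_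
  filter_upwards [Ioo_mem_nhdsGT one_pos] with t ht
  have hmin : g x ≤ t * g y + (1 - t) * g x - t * (1 - t) * Q :=
    (isMinOn_iff.1 hx _ (hs hys hxs ht.1.le (sub_nonneg.2 ht.2.le) (by ring))).trans (hg t ht)
  exact le_of_mul_le_mul_left (by linarith) ht.1

section InnerProduct

variable {F : Type*} [NormedAddCommGroup F] [InnerProductSpace ℝ F]

theorem norm_smul_add_one_sub_smul_sq (a b : F) (t : ℝ) :
    ‖t • a + (1 - t) • b‖ ^ 2 = t * ‖a‖ ^ 2 + (1 - t) * ‖b‖ ^ 2 - t * (1 - t) * ‖a - b‖ ^ 2 := by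
  rw [norm_add_sq_real, norm_sub_sq_real, norm_smul, norm_smul, real_inner_smul_left,
    real_inner_smul_right, mul_pow, mul_pow, Real.norm_eq_abs, Real.norm_eq_abs, sq_abs, sq_abs]
  ring

theorem inner_add_norm_add_sq_segment (c a b w : F) (t : ℝ) :
    ⟪c, t • a + (1 - t) • b⟫ + ‖t • a + (1 - t) • b + w‖ ^ 2
      = t * (⟪c, a⟫ + ‖a + w‖ ^ 2) + (1 - t) * (⟪c, b⟫ + ‖b + w‖ ^ 2)
        - t * (1 - t) * ‖a - b‖ ^ 2 := by
  have hw : t • a + (1 - t) • b + w = t • (a + w) + (1 - t) • (b + w) := by module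
  rw [hw, norm_smul_add_one_sub_smul_sq, add_sub_add_right_eq_sub, inner_add_right,
    real_inner_smul_right, real_inner_smul_right]
  ring

theorem inv_mul_norm_add_smul_sq_sub {η : ℝ} (hη : η ≠ 0) (a d : F) :
    η⁻¹ * (‖a + η • d‖ ^ 2 - ‖a‖ ^ 2) = 2 * ⟪a, d⟫ + η * ‖d‖ ^ 2 := by
  rw [norm_add_sq_real, norm_smul, real_inner_smul_right, mul_pow, Real.norm_eq_abs, sq_abs]
  field_simp
  ring
/-- On the edge `(i, j)`, with `a, b, ah, bh, z` standing for `v_i^j, v_j^i, v̂_i^j, v̂_j^i,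
v*_i^j`: the Lyapunov drift plus the claimed decrease, minus the bound on the dual pairing.
Only its sum with the reversed edge has a sign. -/
noncomputable def edgeResidual (η : ℝ) (a b ah bh z : F) : ℝ :=
  2 * ⟪a - z, ah - a⟫ + η * ‖ah - a‖ ^ 2 + (1 - η) * ⟪a + b, ah + bh⟫ + η / 2 * ‖ah + bh‖ ^ 2
    + (3 / 2 - η) * ‖ah - a‖ ^ 2 + (η - (2 * η) ^ 2) / 2 * ‖ah + bh‖ ^ 2
    - (‖ah - z‖ ^ 2 + ‖ah + b‖ ^ 2 - ‖z + b‖ ^ 2)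

theorem edgeResidual_add_swap (η : ℝ) (a b ah bh z : F) :
    edgeResidual η a b ah bh z + edgeResidual η b a bh ah (-z)
      = -(1 / 2) * ‖(ah - a) - (2 * η) • (ah + bh)‖ ^ 2
        - (1 / 2) * ‖(bh - b) - (2 * η) • (ah + bh)‖ ^ 2 := by
  simp only [edgeResidual, ← real_inner_self_eq_norm_sq, inner_add_left, inner_add_right,
    inner_sub_left, inner_sub_right, inner_neg_left, inner_neg_right, real_inner_smul_right,
    real_inner_comm]
  ring

end InnerProduct

section EdgeSum

variable {ι : Type*} [Fintype ι] (Nbr : ι → ι → Prop) [DecidableRel Nbr]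

def edgeSum (g : ι → ι → ℝ) : ℝ :=
  ∑ i, ∑ j ∈ univ.filter (fun j => Nbr i j), g i j

variable {Nbr} {F : Type*} [NormedAddCommGroup F] [InnerProductSpace ℝ F]

theorem edgeSum_add (f g : ι → ι → ℝ) :
    edgeSum Nbr (fun i j => f i j + g i j) = edgeSum Nbr f + edgeSum Nbr g := by
  simp only [edgeSum, sum_add_distrib]

theorem edgeSum_sub (f g : ι → ι → ℝ) :
    edgeSum Nbr (fun i j => f i j - g i j) = edgeSum Nbr f - edgeSum Nbr g := by
  simp only [edgeSum, sum_sub_distrib]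

theorem edgeSum_congr {f g : ι → ι → ℝ} (h : ∀ i j, Nbr i j → f i j = g i j) :
    edgeSum Nbr f = edgeSum Nbr g :=
  sum_congr rfl fun i _ => sum_congr rfl fun j hj => h i j (mem_filter.1 hj).2

theorem edgeSum_nonneg {g : ι → ι → ℝ} (h : ∀ i j, Nbr i j → 0 ≤ g i j) :
    0 ≤ edgeSum Nbr g :=
  sum_nonneg fun i _ => sum_nonneg fun j hj => h i j (mem_filter.1 hj).2

theorem edgeSum_swap (hsymm : ∀ i j, Nbr i j ↔ Nbr j i) (g : ι → ι → ℝ) :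
    edgeSum Nbr (fun i j => g j i) = edgeSum Nbr g := by
  simp only [edgeSum, sum_filter]
  rw [sum_comm]
  exact sum_congr rfl fun i _ => sum_congr rfl fun j _ => by simp only [hsymm i j]

theorem edgeSum_nonpos_of_add_swap_nonpos (hsymm : ∀ i j, Nbr i j ↔ Nbr j i)
    {g : ι → ι → ℝ} (h : ∀ i j, Nbr i j → g i j + g j i ≤ 0) : edgeSum Nbr g ≤ 0 := by
  have h2 : edgeSum Nbr (fun i j => g i j + g j i) ≤ 0 :=
    sum_nonpos fun i _ => sum_nonpos fun j hj => h i j (mem_filter.1 hj).2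
  rw [edgeSum_add, edgeSum_swap hsymm g] at h2
  linarith

theorem eq_zero_of_edgeSum_nonpos {g : ι → ι → ℝ} (hg : ∀ i j, 0 ≤ g i j)
    (h : edgeSum Nbr g ≤ 0) (i j : ι) (hij : Nbr i j) : g i j = 0 := by
  have hrow := (sum_eq_zero_iff_of_nonneg fun i _ => sum_nonneg fun j _ => hg i j).1
    (le_antisymm h (edgeSum_nonneg fun i j _ => hg i j)) i (mem_univ i)
  exact (sum_eq_zero_iff_of_nonneg fun j _ => hg i j).1 hrow j (by simpa using hij)

theorem edgeSum_inner_add_swap (hsymm : ∀ i j, Nbr i j ↔ Nbr j i) (lam w : ι → ι → F) :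
    (edgeSum Nbr fun i j => ⟪lam i j + lam j i, w i j⟫)
      = edgeSum Nbr fun i j => ⟪lam i j, w i j + w j i⟫ := by
  simp only [inner_add_left, inner_add_right, edgeSum_add]
  rw [edgeSum_swap hsymm fun i j => ⟪lam i j, w j i⟫]

theorem lyapunov_sub_eq (hsymm : ∀ i j, Nbr i j ↔ Nbr j i) {η : ι → ι → ℝ}
    (hηsymm : ∀ i j, Nbr i j → η i j = η j i) (hη : ∀ i j, Nbr i j → η i j ≠ 0)
    {v v' vhat lam lam' lt lt' vstar lamstar : ι → ι → F}
    (hv : ∀ i j, Nbr i j → v' i j = η i j • vhat i j + (1 - η i j) • v i j)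
    (hlam : ∀ i j, Nbr i j → lam' i j = lam i j + η i j • (v' i j + v' j i))
    (hlt : ∀ i j, Nbr i j → lt i j = lam i j + (1 - η i j) • (v i j + v j i))
    (hlt' : ∀ i j, Nbr i j → lt' i j = lam' i j + (1 - η i j) • (v' i j + v' j i)) :
    (edgeSum Nbr fun i j =>
        (η i j)⁻¹ * (‖v' i j - vstar i j‖ ^ 2 + 1 / 2 * ‖lt' i j - lamstar i j‖ ^ 2))
      - (edgeSum Nbr fun i j =>
        (η i j)⁻¹ * (‖v i j - vstar i j‖ ^ 2 + 1 / 2 * ‖lt i j - lamstar i j‖ ^ 2))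
      = edgeSum Nbr fun i j => 2 * ⟪v i j - vstar i j, vhat i j - v i j⟫
        + η i j * ‖vhat i j - v i j‖ ^ 2 + ⟪lam i j - lamstar i j, vhat i j + vhat j i⟫
        + (1 - η i j) * ⟪v i j + v j i, vhat i j + vhat j i⟫
        + η i j / 2 * ‖vhat i j + vhat j i‖ ^ 2 := by
  rw [← edgeSum_sub]
  refine edgeSum_congr fun i j hij => ?_
  have hv' : v' i j - vstar i j = (v i j - vstar i j) + η i j • (vhat i j - v i j) := by
    rw [hv i j hij]; module
  have hlt'' : lt' i j - lamstar i j
      = (lt i j - lamstar i j) + η i j • (vhat i j + vhat j i) := by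
    rw [hlt' i j hij, hlam i j hij, hv i j hij, hv j i ((hsymm i j).1 hij), hlt i j hij,
      ← hηsymm i j hij]
    module
  have hpair : ⟪lt i j - lamstar i j, vhat i j + vhat j i⟫
      = ⟪lam i j - lamstar i j, vhat i j + vhat j i⟫
        + (1 - η i j) * ⟪v i j + v j i, vhat i j + vhat j i⟫ := by
    rw [hlt i j hij, add_sub_right_comm, inner_add_left, real_inner_smul_left]
  rw [hv', hlt'']
  linear_combination inv_mul_norm_add_smul_sq_sub (hη i j hij) (v i j - vstar i j)
      (vhat i j - v i j)
    + 1 / 2 * inv_mul_norm_add_smul_sq_sub (hη i j hij) (lt i j - lamstar i j)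
      (vhat i j + vhat j i) + hpair

end EdgeSum

section AgentObjective

variable {ι : Type*} [Fintype ι] (Nbr : ι → ι → Prop) [DecidableRel Nbr]
  {E : ι → Type*} [∀ i, NormedAddCommGroup (E i)] [∀ i, InnerProductSpace ℝ (E i)]
  {F : Type*} [NormedAddCommGroup F] [InnerProductSpace ℝ F]

/-- The function agent `i` minimizes over `C i` in Algorithm 1, given `λ(k) = lam`, `v(k) = v`. -/
def agentObjective (fp : ∀ i, E i → ℝ) (fs : ι → (ι → F) → ℝ) (i : ι) (lam v : ι → ι → F)
    (p : E i × (ι → F)) : ℝ :=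
  fp i p.1 + fs i p.2 +
    ∑ j ∈ univ.filter (fun j => Nbr i j), (⟪lam i j + lam j i, p.2 j⟫ + ‖p.2 j + v j i‖ ^ 2)

variable {Nbr}

theorem agentObjective_segment_le {fp : ∀ i, E i → ℝ} {fs : ι → (ι → F) → ℝ} {i : ι} {m : ℝ}
    (hfp : StrongConvexOn Set.univ m (fp i)) (hfs : ConvexOn ℝ Set.univ (fs i))
    (lam v : ι → ι → F) (p q : E i × (ι → F)) {t : ℝ} (ht0 : 0 ≤ t) (ht1 : t ≤ 1) :
    agentObjective Nbr fp fs i lam v (t • p + (1 - t) • q)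
      ≤ t * agentObjective Nbr fp fs i lam v p + (1 - t) * agentObjective Nbr fp fs i lam v q
        - t * (1 - t) * (m / 2 * ‖p.1 - q.1‖ ^ 2
          + ∑ j ∈ univ.filter (fun j => Nbr i j), ‖p.2 j - q.2 j‖ ^ 2) := by
  have hf := hfp.2 (Set.mem_univ p.1) (Set.mem_univ q.1) ht0 (sub_nonneg.2 ht1) (by ring)
  have hs := hfs.2 (Set.mem_univ p.2) (Set.mem_univ q.2) ht0 (sub_nonneg.2 ht1) (by ring)
  simp only [smul_eq_mul] at hf hs
  simp only [agentObjective, Prod.fst_add, Prod.snd_add, Prod.smul_fst, Prod.smul_snd,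
    Pi.add_apply, Pi.smul_apply, inner_add_norm_add_sq_segment, sum_add_distrib,
    sum_sub_distrib, ← mul_sum]
  linarith

end AgentObjective

section Lagrangian

variable {ι : Type*} [Fintype ι] {Nbr : ι → ι → Prop} [DecidableRel Nbr] {ns : ℕ} {n : ι → ℕ}
  {fp : ∀ i, EuclideanSpace ℝ (Fin (n i)) → ℝ} {fs : ι → (ι → EuclideanSpace ℝ (Fin ns)) → ℝ}
  {C : ∀ i, Set (EuclideanSpace ℝ (Fin (n i)) × (ι → EuclideanSpace ℝ (Fin ns)))}
  {ustar : ∀ i, EuclideanSpace ℝ (Fin (n i))} {vstar lamstar : ι → ι → EuclideanSpace ℝ (Fin ns)}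

theorem augLagrangian_eq (u : ∀ i, EuclideanSpace ℝ (Fin (n i)))
    (v lam : ι → ι → EuclideanSpace ℝ (Fin ns)) :
    augLagrangian Nbr fp fs u v lam = ∑ i, (fp i (u i) + fs i (v i))
      + edgeSum Nbr fun i j => ⟪lam i j, v i j + v j i⟫ + ‖v i j + v j i‖ ^ 2 := by
  simp only [augLagrangian, edgeSum, sum_add_distrib]

theorem augLagrangian_segment_le {m : ι → ℝ} (hfp : ∀ i, StrongConvexOn Set.univ (m i) (fp i))
    (hfs : ∀ i, ConvexOn ℝ Set.univ (fs i)) (lam : ι → ι → EuclideanSpace ℝ (Fin ns))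
    (u u' : ∀ i, EuclideanSpace ℝ (Fin (n i))) (v v' : ι → ι → EuclideanSpace ℝ (Fin ns))
    {t : ℝ} (ht0 : 0 ≤ t) (ht1 : t ≤ 1) :
    augLagrangian Nbr fp fs (t • u + (1 - t) • u') (t • v + (1 - t) • v') lam
      ≤ t * augLagrangian Nbr fp fs u v lam + (1 - t) * augLagrangian Nbr fp fs u' v' lam
        - t * (1 - t) * (∑ i, m i / 2 * ‖u i - u' i‖ ^ 2
          + edgeSum Nbr fun i j => ‖(v i j + v j i) - (v' i j + v' j i)‖ ^ 2) := by
  have hagent : ∀ i, fp i (t • u i + (1 - t) • u' i) + fs i (t • v i + (1 - t) • v' i)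
      ≤ t * (fp i (u i) + fs i (v i)) + (1 - t) * (fp i (u' i) + fs i (v' i))
        - t * (1 - t) * (m i / 2 * ‖u i - u' i‖ ^ 2) := fun i => by
    have hf := (hfp i).2 (Set.mem_univ (u i)) (Set.mem_univ (u' i)) ht0 (sub_nonneg.2 ht1)
      (by ring)
    have hs := (hfs i).2 (Set.mem_univ (v i)) (Set.mem_univ (v' i)) ht0 (sub_nonneg.2 ht1)
      (by ring)
    simp only [smul_eq_mul] at hf hs
    linarith
  have hedge : ∀ i j, t • v i j + (1 - t) • v' i j + (t • v j i + (1 - t) • v' j i)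
      = t • (v i j + v j i) + (1 - t) • (v' i j + v' j i) := fun i j => by module
  have hsum := sum_le_sum fun i (_ : i ∈ univ) => hagent i
  simp only [augLagrangian, edgeSum, Pi.add_apply, Pi.smul_apply, hedge, inner_add_right,
    real_inner_smul_right, norm_smul_add_one_sub_smul_sq, sum_add_distrib, sum_sub_distrib,
    ← mul_sum] at hsum ⊢
  linarith

theorem IsSaddlePoint.add_swap_eq_zero (h : IsSaddlePoint Nbr fp fs C ustar vstar lamstar)
    {i j : ι} (hij : Nbr i j) : vstar i j + vstar j i = 0 := by
  have hle := h.2.1 fun i j => lamstar i j + (vstar i j + vstar j i)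
  have hshift : (edgeSum Nbr fun i j => ⟪lamstar i j + (vstar i j + vstar j i),
        vstar i j + vstar j i⟫ + ‖vstar i j + vstar j i‖ ^ 2)
      = (edgeSum Nbr fun i j => ⟪lamstar i j, vstar i j + vstar j i⟫
        + ‖vstar i j + vstar j i‖ ^ 2) + edgeSum Nbr fun i j => ‖vstar i j + vstar j i‖ ^ 2 := by
    rw [← edgeSum_add]
    exact edgeSum_congr fun i j _ => by rw [inner_add_left, real_inner_self_eq_norm_sq]
  rw [augLagrangian_eq, augLagrangian_eq, hshift] at hle
  have hsq := eq_zero_of_edgeSum_nonpos (g := fun i j => ‖vstar i j + vstar j i‖ ^ 2)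
    (fun _ _ => sq_nonneg _) (by linarith) i j hij
  exact norm_eq_zero.1 (pow_eq_zero_iff two_ne_zero |>.1 hsq)

theorem IsSaddlePoint.quadratic_growth {m : ι → ℝ}
    (h : IsSaddlePoint Nbr fp fs C ustar vstar lamstar)
    (hfp : ∀ i, StrongConvexOn Set.univ (m i) (fp i)) (hfs : ∀ i, ConvexOn ℝ Set.univ (fs i))
    (hC : ∀ i, Convex ℝ (C i)) {u : ∀ i, EuclideanSpace ℝ (Fin (n i))}
    {v : ι → ι → EuclideanSpace ℝ (Fin ns)} (huv : ∀ i, (u i, v i) ∈ C i) :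
    ∑ i, (fp i (ustar i) + fs i (vstar i)) + ∑ i, m i / 2 * ‖u i - ustar i‖ ^ 2
      ≤ ∑ i, (fp i (u i) + fs i (v i)) + edgeSum Nbr fun i j => ⟪lamstar i j, v i j + v j i⟫ := by
  let S := {p : (∀ i, EuclideanSpace ℝ (Fin (n i))) × (ι → ι → EuclideanSpace ℝ (Fin ns)) |
    ∀ i, (p.1 i, p.2 i) ∈ C i}
  have hS : Convex ℝ S := fun p hp q hq a b ha hb hab i => hC i (hp i) (hq i) ha hb hab
  have hmin : IsMinOn (fun p => augLagrangian Nbr fp fs p.1 p.2 lamstar) S (ustar, vstar) :=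
    isMinOn_iff.2 fun p hp => h.2.2 p.1 p.2 hp
  have hgrowth := hmin.add_le_of_segment_le hS h.1 (y := (u, v)) huv fun t ht =>
    augLagrangian_segment_le hfp hfs lamstar u ustar v vstar ht.1.le ht.2.le
  have hzero : (edgeSum Nbr fun i j => ⟪lamstar i j, vstar i j + vstar j i⟫
      + ‖vstar i j + vstar j i‖ ^ 2) = 0 := by
    rw [edgeSum_congr (g := fun _ _ => 0) fun i j hij => by simp [h.add_swap_eq_zero hij]]
    simp [edgeSum]
  have hpenalty : (edgeSum Nbr fun i j => ‖v i j + v j i - (vstar i j + vstar j i)‖ ^ 2)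
      = edgeSum Nbr fun i j => ‖v i j + v j i‖ ^ 2 :=
    edgeSum_congr fun i j hij => by rw [h.add_swap_eq_zero hij, sub_zero]
  simp only [augLagrangian_eq, hzero, hpenalty, edgeSum_add] at hgrowth
  linarith

theorem IsSaddlePoint.dual_pairing_le {m : ι → ℝ}
    (h : IsSaddlePoint Nbr fp fs C ustar vstar lamstar) (hsymm : ∀ i j, Nbr i j ↔ Nbr j i)
    (hfp : ∀ i, StrongConvexOn Set.univ (m i) (fp i)) (hfs : ∀ i, ConvexOn ℝ Set.univ (fs i))
    (hC : ∀ i, Convex ℝ (C i)) {u : ∀ i, EuclideanSpace ℝ (Fin (n i))}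
    {v vhat lam : ι → ι → EuclideanSpace ℝ (Fin ns)}
    (hmin : ∀ i, (u i, vhat i) ∈ C i ∧
      IsMinOn (agentObjective Nbr fp fs i lam v) (C i) (u i, vhat i)) :
    ∑ i, m i * ‖u i - ustar i‖ ^ 2
      + (edgeSum Nbr fun i j => ⟪lam i j - lamstar i j, vhat i j + vhat j i⟫
        + ‖vhat i j - vstar i j‖ ^ 2 + ‖vhat i j + v j i‖ ^ 2 - ‖vstar i j + v j i‖ ^ 2) ≤ 0 := by
  have hagent : ∀ i, agentObjective Nbr fp fs i lam v (u i, vhat i)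
      + (m i / 2 * ‖ustar i - u i‖ ^ 2
        + ∑ j ∈ univ.filter (fun j => Nbr i j), ‖vstar i j - vhat i j‖ ^ 2)
      ≤ agentObjective Nbr fp fs i lam v (ustar i, vstar i) := fun i =>
    (hmin i).2.add_le_of_segment_le (hC i) (hmin i).1 (h.1 i) fun t ht =>
      agentObjective_segment_le (hfp i) (hfs i) lam v _ _ ht.1.le ht.2.le
  have hglobal := h.quadratic_growth hfp hfs hC fun i => (hmin i).1
  have hswap : (edgeSum Nbr fun i j => ⟪lam i j + lam j i, vstar i j - vhat i j⟫)
      = edgeSum Nbr fun i j => -⟪lam i j, vhat i j + vhat j i⟫ :=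
    (edgeSum_inner_add_swap hsymm lam _).trans <| edgeSum_congr fun i j hij => by
      rw [← inner_neg_right]
      congr 1
      linear_combination (norm := module) h.add_swap_eq_zero hij
  have hsum := sum_le_sum fun i (_ : i ∈ univ) => hagent i
  have hm : ∑ i, m i * ‖u i - ustar i‖ ^ 2 = 2 * ∑ i, m i / 2 * ‖u i - ustar i‖ ^ 2 := by
    rw [mul_sum]; exact sum_congr rfl fun i _ => by ring
  simp only [agentObjective, edgeSum, inner_sub_left, inner_sub_right, norm_sub_rev (ustar _),
    norm_sub_rev (vstar _ _), sum_add_distrib, sum_sub_distrib, sum_neg_distrib]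
    at hsum hglobal hswap ⊢
  linarith

theorem IsSaddlePoint.lyapunov_sub_le {m : ι → ℝ} {η : ι → ι → ℝ}
    (h : IsSaddlePoint Nbr fp fs C ustar vstar lamstar) (hsymm : ∀ i j, Nbr i j ↔ Nbr j i)
    (hfp : ∀ i, StrongConvexOn Set.univ (m i) (fp i)) (hfs : ∀ i, ConvexOn ℝ Set.univ (fs i))
    (hC : ∀ i, Convex ℝ (C i)) (hηsymm : ∀ i j, Nbr i j → η i j = η j i)
    (hη : ∀ i j, Nbr i j → η i j ≠ 0) {u : ∀ i, EuclideanSpace ℝ (Fin (n i))}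
    {v v' vhat lam lam' lt lt' : ι → ι → EuclideanSpace ℝ (Fin ns)}
    (hmin : ∀ i, (u i, vhat i) ∈ C i ∧
      IsMinOn (agentObjective Nbr fp fs i lam v) (C i) (u i, vhat i))
    (hv : ∀ i j, Nbr i j → v' i j = η i j • vhat i j + (1 - η i j) • v i j)
    (hlam : ∀ i j, Nbr i j → lam' i j = lam i j + η i j • (v' i j + v' j i))
    (hlt : ∀ i j, Nbr i j → lt i j = lam i j + (1 - η i j) • (v i j + v j i))
    (hlt' : ∀ i j, Nbr i j → lt' i j = lam' i j + (1 - η i j) • (v' i j + v' j i)) :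
    (edgeSum Nbr fun i j =>
        (η i j)⁻¹ * (‖v' i j - vstar i j‖ ^ 2 + 1 / 2 * ‖lt' i j - lamstar i j‖ ^ 2))
      - (edgeSum Nbr fun i j =>
        (η i j)⁻¹ * (‖v i j - vstar i j‖ ^ 2 + 1 / 2 * ‖lt i j - lamstar i j‖ ^ 2))
      ≤ -(∑ i, m i * ‖u i - ustar i‖ ^ 2)
        - (edgeSum Nbr fun i j => (3 / 2 - η i j) * ‖vhat i j - v i j‖ ^ 2)
        - edgeSum Nbr fun i j => (η i j - (2 * η i j) ^ 2) / 2 * ‖vhat i j + vhat j i‖ ^ 2 := by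
  have hdual := h.dual_pairing_le hsymm hfp hfs hC hmin
  have hresidual : (edgeSum Nbr fun i j =>
      edgeResidual (η i j) (v i j) (v j i) (vhat i j) (vhat j i) (vstar i j)) ≤ 0 := by
    refine edgeSum_nonpos_of_add_swap_nonpos hsymm fun i j hij => ?_
    rw [← hηsymm i j hij, eq_neg_of_add_eq_zero_right (h.add_swap_eq_zero hij),
      edgeResidual_add_swap]
    nlinarith [sq_nonneg ‖(vhat i j - v i j) - (2 * η i j) • (vhat i j + vhat j i)‖,
      sq_nonneg ‖(vhat j i - v j i) - (2 * η i j) • (vhat i j + vhat j i)‖]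
  rw [lyapunov_sub_eq hsymm hηsymm hη hv hlam hlt hlt',
    edgeSum_congr (g := fun i j =>
      edgeResidual (η i j) (v i j) (v j i) (vhat i j) (vhat j i) (vstar i j)
        + (⟪lam i j - lamstar i j, vhat i j + vhat j i⟫ + ‖vhat i j - vstar i j‖ ^ 2
          + ‖vhat i j + v j i‖ ^ 2 - ‖vstar i j + v j i‖ ^ 2)
        - (3 / 2 - η i j) * ‖vhat i j - v i j‖ ^ 2
        - (η i j - (2 * η i j) ^ 2) / 2 * ‖vhat i j + vhat j i‖ ^ 2)
      fun i j _ => by unfold edgeResidual; ring,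
    edgeSum_sub, edgeSum_sub, edgeSum_add]
  linarith

end Lagrangian

theorem adal_lemma_three_general {ι : Type*} [Fintype ι] {ns : ℕ} {n : ι → ℕ}
    (Nbr : ι → ι → Prop) [DecidableRel Nbr]
    (hsymm : ∀ i j, Nbr i j ↔ Nbr j i)
    (fp : ∀ i, EuclideanSpace ℝ (Fin (n i)) → ℝ)
    (fs : ι → (ι → EuclideanSpace ℝ (Fin ns)) → ℝ)
    (C : ∀ i, Set (EuclideanSpace ℝ (Fin (n i)) × (ι → EuclideanSpace ℝ (Fin ns))))
    (m : ι → ℝ) (hm : ∀ i, 0 < m i)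
    (hfp_sc : ∀ i, StrongConvexOn Set.univ (m i) (fp i))
    (hfs_cvx : ∀ i, ConvexOn ℝ Set.univ (fs i))
    (hC_cvx : ∀ i, Convex ℝ (C i))
    -- symmetric step sizes in (0, 1/4)
    (η : ι → ι → ℝ) (hηsymm : ∀ i j, Nbr i j → η i j = η j i)
    (hη : ∀ i j, Nbr i j → η i j ∈ Set.Ioo (0 : ℝ) (1 / 4))
    -- sequences generated by Algorithm 1
    (u : ℕ → ∀ i, EuclideanSpace ℝ (Fin (n i)))
    (v vhat lam : ℕ → ι → ι → EuclideanSpace ℝ (Fin ns))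
    (hmin : ∀ k i, (u (k + 1) i, vhat k i) ∈ C i ∧
      ∀ p ∈ C i,
        fp i (u (k + 1) i) + fs i (vhat k i) +
            ∑ j ∈ Finset.univ.filter (fun j => Nbr i j),
              (⟪lam k i j + lam k j i, vhat k i j⟫ + ‖vhat k i j + v k j i‖ ^ 2)
          ≤ fp i p.1 + fs i p.2 +
            ∑ j ∈ Finset.univ.filter (fun j => Nbr i j),
              (⟪lam k i j + lam k j i, p.2 j⟫ + ‖p.2 j + v k j i‖ ^ 2))
    (hv_up : ∀ k i j, Nbr i j →
      v (k + 1) i j = η i j • vhat k i j + (1 - η i j) • v k i j)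
    (hlam_up : ∀ k i j, Nbr i j →
      lam (k + 1) i j = lam k i j + η i j • (v (k + 1) i j + v (k + 1) j i))
    -- saddle point
    (ustar : ∀ i, EuclideanSpace ℝ (Fin (n i)))
    (vstar lamstar : ι → ι → EuclideanSpace ℝ (Fin ns))
    (hsaddle : IsSaddlePoint Nbr fp fs C ustar vstar lamstar)
    -- auxiliary multipliers and Lyapunov function
    (lamTilde : ℕ → ι → ι → EuclideanSpace ℝ (Fin ns))
    (hlamTilde : ∀ k i j, Nbr i j →
      lamTilde k i j = lam k i j + (1 - η i j) • (v k i j + v k j i))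
    (V : ℕ → ℝ)
    (hV : ∀ k, V k = ∑ i, ∑ j ∈ Finset.univ.filter (fun j => Nbr i j),
      (η i j)⁻¹ * (‖v k i j - vstar i j‖ ^ 2 + (1 / 2) * ‖lamTilde k i j - lamstar i j‖ ^ 2)) :
    (∀ k, V (k + 1) ≤ V k) ∧
    ∀ k, V (k + 1) - V k ≤
      - (∑ i, m i * ‖u (k + 1) i - ustar i‖ ^ 2)
      - ∑ i, ∑ j ∈ Finset.univ.filter (fun j => Nbr i j),
          (3 / 2 - η i j) * ‖vhat k i j - v k i j‖ ^ 2
      - ∑ i, ∑ j ∈ Finset.univ.filter (fun j => Nbr i j),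
          ((η i j - (2 * η i j) ^ 2) / 2) * ‖vhat k i j + vhat k j i‖ ^ 2 := by
  have hdrift : ∀ k, V (k + 1) - V k ≤ -(∑ i, m i * ‖u (k + 1) i - ustar i‖ ^ 2)
      - (edgeSum Nbr fun i j => (3 / 2 - η i j) * ‖vhat k i j - v k i j‖ ^ 2)
      - edgeSum Nbr fun i j => (η i j - (2 * η i j) ^ 2) / 2 * ‖vhat k i j + vhat k j i‖ ^ 2 := by
    intro k
    rw [hV, hV]
    exact hsaddle.lyapunov_sub_le hsymm hfp_sc hfs_cvx hC_cvx hηsymm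
      (fun i j hij => (hη i j hij).1.ne') (hmin k) (hv_up k) (hlam_up k) (hlamTilde k)
      (hlamTilde (k + 1))
  refine ⟨fun k => sub_nonpos.1 ((hdrift k).trans ?_), hdrift⟩
  have hu : 0 ≤ ∑ i, m i * ‖u (k + 1) i - ustar i‖ ^ 2 :=
    sum_nonneg fun i _ => mul_nonneg (hm i).le (sq_nonneg _)
  have hα : 0 ≤ edgeSum Nbr fun i j => (3 / 2 - η i j) * ‖vhat k i j - v k i j‖ ^ 2 :=
    edgeSum_nonneg fun i j hij => mul_nonneg (by linarith [(hη i j hij).2]) (sq_nonneg _)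
  have hc : 0 ≤ edgeSum Nbr fun i j =>
      (η i j - (2 * η i j) ^ 2) / 2 * ‖vhat k i j + vhat k j i‖ ^ 2 :=
    edgeSum_nonneg fun i j hij => by
      obtain ⟨hη0, hη1⟩ := hη i j hij
      exact mul_nonneg (by nlinarith) (sq_nonneg _)
  linarith

/-- Lemma 3: along Algorithm 1 with symmetric step sizes `η_ij ∈ (0, 1/4)` the Lyapunov
function `V(k) = ∑ i ∑ {j ∈ N_i} η_ij⁻¹ ( ‖v_i^j(k) − v*_i^j‖² + (1/2) ‖λ̃_i^j(k) − λ*_i^j‖² )`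
is monotonically non-increasing and satisfies the drift inequality. -/
theorem adal_lemma_three {ι : Type*} [Fintype ι] {ns : ℕ} {n : ι → ℕ}
    (Nbr : ι → ι → Prop) [DecidableRel Nbr]
    (hsymm : ∀ i j, Nbr i j ↔ Nbr j i) (hirr : ∀ i, ¬ Nbr i i)
    (fp : ∀ i, EuclideanSpace ℝ (Fin (n i)) → ℝ)
    (fs : ι → (ι → EuclideanSpace ℝ (Fin ns)) → ℝ)
    (C : ∀ i, Set (EuclideanSpace ℝ (Fin (n i)) × (ι → EuclideanSpace ℝ (Fin ns))))
    (m : ι → ℝ) (hm : ∀ i, 0 < m i)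
    (hfp_diff : ∀ i, Differentiable ℝ (fp i))
    (hfp_sc : ∀ i, StrongConvexOn Set.univ (m i) (fp i))
    (hfs_diff : ∀ i, Differentiable ℝ (fs i))
    (hfs_cvx : ∀ i, ConvexOn ℝ Set.univ (fs i))
    (hC_ne : ∀ i, (C i).Nonempty) (hC_cpt : ∀ i, IsCompact (C i))
    (hC_cvx : ∀ i, Convex ℝ (C i))
    -- symmetric step sizes in (0, 1/4)
    (η : ι → ι → ℝ) (hηsymm : ∀ i j, Nbr i j → η i j = η j i)
    (hη : ∀ i j, Nbr i j → η i j ∈ Set.Ioo (0 : ℝ) (1 / 4))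
    -- sequences generated by Algorithm 1
    (u : ℕ → ∀ i, EuclideanSpace ℝ (Fin (n i)))
    (v vhat lam : ℕ → ι → ι → EuclideanSpace ℝ (Fin ns))
    (hmin : ∀ k i, (u (k + 1) i, vhat k i) ∈ C i ∧
      ∀ p ∈ C i,
        fp i (u (k + 1) i) + fs i (vhat k i) +
            ∑ j ∈ Finset.univ.filter (fun j => Nbr i j),
              (⟪lam k i j + lam k j i, vhat k i j⟫ + ‖vhat k i j + v k j i‖ ^ 2)
          ≤ fp i p.1 + fs i p.2 +
            ∑ j ∈ Finset.univ.filter (fun j => Nbr i j),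
              (⟪lam k i j + lam k j i, p.2 j⟫ + ‖p.2 j + v k j i‖ ^ 2))
    (hv_up : ∀ k i j, Nbr i j →
      v (k + 1) i j = η i j • vhat k i j + (1 - η i j) • v k i j)
    (hlam_up : ∀ k i j, Nbr i j →
      lam (k + 1) i j = lam k i j + η i j • (v (k + 1) i j + v (k + 1) j i))
    -- saddle point
    (ustar : ∀ i, EuclideanSpace ℝ (Fin (n i)))
    (vstar lamstar : ι → ι → EuclideanSpace ℝ (Fin ns))
    (hsaddle : IsSaddlePoint Nbr fp fs C ustar vstar lamstar)
    -- auxiliary multipliers and Lyapunov function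
    (lamTilde : ℕ → ι → ι → EuclideanSpace ℝ (Fin ns))
    (hlamTilde : ∀ k i j, Nbr i j →
      lamTilde k i j = lam k i j + (1 - η i j) • (v k i j + v k j i))
    (V : ℕ → ℝ)
    (hV : ∀ k, V k = ∑ i, ∑ j ∈ Finset.univ.filter (fun j => Nbr i j),
      (η i j)⁻¹ * (‖v k i j - vstar i j‖ ^ 2 + (1 / 2) * ‖lamTilde k i j - lamstar i j‖ ^ 2)) :
    (∀ k, V (k + 1) ≤ V k) ∧
    ∀ k, V (k + 1) - V k ≤
      - (∑ i, m i * ‖u (k + 1) i - ustar i‖ ^ 2)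
      - ∑ i, ∑ j ∈ Finset.univ.filter (fun j => Nbr i j),
          (3 / 2 - η i j) * ‖vhat k i j - v k i j‖ ^ 2
      - ∑ i, ∑ j ∈ Finset.univ.filter (fun j => Nbr i j),
          ((η i j - (2 * η i j) ^ 2) / 2) * ‖vhat k i j + vhat k j i‖ ^ 2 :=
  adal_lemma_three_general Nbr hsymm fp fs C m hm hfp_sc hfs_cvx hC_cvx η hηsymm hη u v vhat lam
    hmin hv_up hlam_up ustar vstar lamstar hsaddle lamTilde hlamTilde V hV
end
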